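/- arXiv:2002.12777 — 11 statements merged into one kernel-verified Lean document; each statement's English description precedes it below -/
import Mathlib

section
/- Let l₁, l₂, l₃, l₄ be four distinct lines in the Euclidean plane, pairwise non-parallel and such that no three of them pass through a common point; for i ≠ j let P_{ij} denote the intersection point of l_i and l_j (these hypotheses force the three pairwise intersection points of any three of the lines to be affinely independent). Then the circumcircles of the four triangles P_{23}P_{24}P_{34}, P_{13}P_{14}P_{34}, P_{12}P_{14}P_{24}, P_{12}P_{13}P_{23} (obtained by omitting each of the four lines in turn) have a common point, called the Miquel–Steiner point of the complete quadrilateral. -/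
/-!
The circles through `P₁₂, P₁₃, P₂₃` and through `P₁₂, P₁₄, P₂₄` meet again at the reflection `M`
of `P₁₂` in their line of centres: they cannot be tangent at `P₁₂`, as that would make `l₃`
parallel to `l₄`. Chasing directed angles mod `π`,
`2∡ P₁₃ M P₁₄ = 2∡ P₁₃ P₂₃ P₁₂ + 2∡ P₁₂ P₂₄ P₁₄`, which by the angle sum of the triangle cut
out by `l₂, l₃, l₄` is `2∡ P₁₃ P₃₄ P₁₄`; so `M` is on the circle through `P₁₃, P₁₄, P₃₄`.
Exchanging `l₁` and `l₂` puts `M` on the remaining circle.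
-/

open EuclideanGeometry

open Module

namespace EuclideanGeometry

variable {V P : Type*} [NormedAddCommGroup V] [InnerProductSpace ℝ V] [MetricSpace P]
  [NormedAddTorsor V P]

theorem exists_sphere_of_not_collinear {a b c : P} (h : ¬Collinear ℝ ({a, b, c} : Set P)) :
    ∃ s : Sphere P, a ∈ s ∧ b ∈ s ∧ c ∈ s :=
  let t : Affine.Triangle ℝ P := ⟨![a, b, c], affineIndependent_iff_not_collinear_set.2 h⟩
  ⟨t.circumsphere, t.mem_circumsphere 0, t.mem_circumsphere 1, t.mem_circumsphere 2⟩

theorem Sphere.not_collinear_of_mem {s : Sphere P} {a b c : P} (ha : a ∈ s) (hb : b ∈ s)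
    (hc : c ∈ s) (hab : a ≠ b) (hac : a ≠ c) (hbc : b ≠ c) :
    ¬Collinear ℝ ({a, b, c} : Set P) := by
  rw [← affineIndependent_iff_not_collinear_set]
  refine Cospherical.affineIndependent_of_ne ?_ hab hac hbc
  exact cospherical_iff_exists_sphere.2 ⟨s, by simp [Set.insert_subset_iff, ha, hb, hc]⟩

theorem Sphere.exists_mem_ne_of_not_collinear_center {s₁ s₂ : Sphere P} {a : P}
    (ha₁ : a ∈ s₁) (ha₂ : a ∈ s₂) (h : ¬Collinear ℝ ({s₁.center, a, s₂.center} : Set P)) :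
    ∃ m, m ∈ s₁ ∧ m ∈ s₂ ∧ m ≠ a := by
  set L := line[ℝ, s₁.center, s₂.center]
  have : Nonempty L := ⟨⟨s₁.center, left_mem_affineSpan_pair ℝ _ _⟩⟩
  refine ⟨reflection L a, ?_, ?_, fun hm => h ?_⟩
  · rw [mem_sphere', dist_reflection_eq_of_mem _ (left_mem_affineSpan_pair ℝ _ _)]
    exact mem_sphere'.1 ha₁
  · rw [mem_sphere', dist_reflection_eq_of_mem _ (right_mem_affineSpan_pair ℝ _ _)]
    exact mem_sphere'.1 ha₂
  · exact collinear_triple_of_mem_affineSpan_pair (left_mem_affineSpan_pair ℝ _ _)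
      ((reflection_eq_self_iff a).1 hm) (right_mem_affineSpan_pair ℝ _ _)

section Oriented

variable [Fact (finrank ℝ V = 2)] [Module.Oriented ℝ V (Fin 2)]

/-- Additivity of directed angles between the sides `pr`, `pq`, `qr` of a triangle, each side
represented by one further point on it. -/
theorem two_zsmul_oangle_add_two_zsmul_oangle_of_collinear {p q r x y z : P}
    (hx : Collinear ℝ ({x, p, q} : Set P)) (hy : Collinear ℝ ({y, p, r} : Set P))
    (hz : Collinear ℝ ({z, q, r} : Set P)) (hpq : p ≠ q) (hqr : q ≠ r) (hpr : p ≠ r)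
    (hxp : x ≠ p) (hxq : x ≠ q) (hyp : y ≠ p) (hyr : y ≠ r) (hzq : z ≠ q) (hzr : z ≠ r) :
    (2 : ℤ) • ∡ y p x + (2 : ℤ) • ∡ x q z = (2 : ℤ) • ∡ y r z := by
  have hxqp : Collinear ℝ ({x, q, p} : Set P) := hx.subset (by simp [Set.insert_subset_iff])
  have hyrp : Collinear ℝ ({y, r, p} : Set P) := hy.subset (by simp [Set.insert_subset_iff])
  have hzrq : Collinear ℝ ({z, r, q} : Set P) := hz.subset (by simp [Set.insert_subset_iff])
  rw [hy.two_zsmul_oangle_eq_left hyp hpr.symm, hx.two_zsmul_oangle_eq_right hxp hpq.symm,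
    hxqp.two_zsmul_oangle_eq_left hxq hpq, hz.two_zsmul_oangle_eq_right hzq hqr.symm,
    hyrp.two_zsmul_oangle_eq_left hyr hpr, hzrq.two_zsmul_oangle_eq_right hzr hqr,
    oangle_rev q r p, smul_neg]
  have hsum := congrArg ((2 : ℤ) • ·) (oangle_add_oangle_add_oangle_eq_pi hpr hpq.symm hqr.symm)
  simp only [smul_add, Real.Angle.two_zsmul_coe_pi] at hsum
  exact eq_neg_of_add_eq_zero_left hsum

/-- Circles through `a` with centers collinear with `a` are tangent at `a`, so a line through `a`
cuts them in chords `ac` and `ae` subtending equal angles. -/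
theorem Sphere.two_zsmul_oangle_eq_of_collinear_center {s₁ s₂ : Sphere P} {a b c d e : P}
    (hcenter : Collinear ℝ ({s₁.center, a, s₂.center} : Set P))
    (hace : Collinear ℝ ({c, a, e} : Set P)) (ha₁ : a ∈ s₁) (hb : b ∈ s₁) (hc : c ∈ s₁)
    (ha₂ : a ∈ s₂) (hd : d ∈ s₂) (he : e ∈ s₂) (hba : b ≠ a) (hbc : b ≠ c) (hac : a ≠ c)
    (hda : d ≠ a) (hde : d ≠ e) (hae : a ≠ e) :
    (2 : ℤ) • ∡ a b c = (2 : ℤ) • ∡ a d e := by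
  have h₁ := two_zsmul_oangle_center_add_two_zsmul_oangle_eq_pi ha₁ hb hc hba hbc hac
  have h₂ := two_zsmul_oangle_center_add_two_zsmul_oangle_eq_pi ha₂ hd he hda hde hae
  rw [hace.two_zsmul_oangle_eq_left hac.symm hae.symm,
    hcenter.two_zsmul_oangle_eq_right (ne_center_of_mem_of_mem_of_ne ha₁ hb hba.symm).symm
      (ne_center_of_mem_of_mem_of_ne ha₂ hd hda.symm).symm] at h₁
  exact add_left_cancel (h₁.trans h₂.symm)

theorem Cospherical.miquel {a b c d e f m : P}
    (h₁ : Cospherical ({a, b, c, m} : Set P)) (h₂ : Cospherical ({a, d, e, m} : Set P))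
    (hace : Collinear ℝ ({a, c, e} : Set P)) (hbcf : Collinear ℝ ({b, c, f} : Set P))
    (hdef : Collinear ℝ ({d, e, f} : Set P)) (hbdf : ¬Collinear ℝ ({b, d, f} : Set P))
    (hma : m ≠ a) (hmb : m ≠ b) (hmd : m ≠ d) (hca : c ≠ a) (hcb : c ≠ b) (hea : e ≠ a)
    (hed : e ≠ d) (hce : c ≠ e) (hcf : c ≠ f) (hef : e ≠ f) :
    Cospherical ({b, d, f, m} : Set P) := by
  have hangle : (2 : ℤ) • ∡ b f d = (2 : ℤ) • ∡ b m d :=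
    calc (2 : ℤ) • ∡ b f d = (2 : ℤ) • ∡ b c a + (2 : ℤ) • ∡ a e d :=
          (two_zsmul_oangle_add_two_zsmul_oangle_of_collinear hace hbcf hdef hce hef hcf
            hca.symm hea.symm hcb.symm (ne₁₃_of_not_collinear hbdf) hed.symm
            (ne₂₃_of_not_collinear hbdf)).symm
      _ = (2 : ℤ) • ∡ b m a + (2 : ℤ) • ∡ a m d := by
          rw [(h₁.subset (by simp [Set.insert_subset_iff])).two_zsmul_oangle_eq hcb hca hmb hma,
            (h₂.subset (by simp [Set.insert_subset_iff])).two_zsmul_oangle_eq hea hed hma hmd]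
      _ = (2 : ℤ) • ∡ b m d := by rw [← smul_add, oangle_add hmb.symm hma.symm hmd.symm]
  exact (cospherical_of_two_zsmul_oangle_eq_of_not_collinear hangle (by rwa [Set.pair_comm])).subset
    (by simp [Set.insert_subset_iff])

end Oriented

theorem exists_miquel_point [Fact (finrank ℝ V = 2)] {p₁₂ p₁₃ p₁₄ p₂₃ p₂₄ p₃₄ : P}
    (h₁ : Collinear ℝ ({p₁₂, p₁₃, p₁₄} : Set P)) (h₂ : Collinear ℝ ({p₁₂, p₂₃, p₂₄} : Set P))
    (h₃ : Collinear ℝ ({p₁₃, p₂₃, p₃₄} : Set P)) (h₄ : Collinear ℝ ({p₁₄, p₂₄, p₃₄} : Set P))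
    (hn₁ : ¬Collinear ℝ ({p₂₃, p₂₄, p₃₄} : Set P)) (hn₂ : ¬Collinear ℝ ({p₁₃, p₁₄, p₃₄} : Set P))
    (hn₃ : ¬Collinear ℝ ({p₁₂, p₁₄, p₂₄} : Set P)) (hn₄ : ¬Collinear ℝ ({p₁₂, p₁₃, p₂₃} : Set P)) :
    ∃ m : P, Cospherical ({p₂₃, p₂₄, p₃₄, m} : Set P) ∧
      Cospherical ({p₁₃, p₁₄, p₃₄, m} : Set P) ∧ Cospherical ({p₁₂, p₁₄, p₂₄, m} : Set P) ∧
      Cospherical ({p₁₂, p₁₃, p₂₃, m} : Set P) := by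
  have : FiniteDimensional ℝ V := .of_fact_finrank_eq_two
  let : Module.Oriented ℝ V (Fin 2) := ⟨(finBasisOfFinrankEq ℝ V Fact.out).orientation⟩
  have h₁₂₁₃ := ne₁₂_of_not_collinear hn₄
  have h₁₂₂₃ := ne₁₃_of_not_collinear hn₄
  have h₁₃₂₃ := ne₂₃_of_not_collinear hn₄
  have h₁₂₁₄ := ne₁₂_of_not_collinear hn₃
  have h₁₂₂₄ := ne₁₃_of_not_collinear hn₃
  have h₁₄₂₄ := ne₂₃_of_not_collinear hn₃
  have h₁₃₁₄ := ne₁₂_of_not_collinear hn₂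
  have h₁₃₃₄ := ne₁₃_of_not_collinear hn₂
  have h₁₄₃₄ := ne₂₃_of_not_collinear hn₂
  have h₂₃₂₄ := ne₁₂_of_not_collinear hn₁
  have h₂₃₃₄ := ne₁₃_of_not_collinear hn₁
  have h₂₄₃₄ := ne₂₃_of_not_collinear hn₁
  obtain ⟨s₄, h₁₂s₄, h₁₃s₄, h₂₃s₄⟩ := exists_sphere_of_not_collinear hn₄
  obtain ⟨s₃, h₁₂s₃, h₁₄s₃, h₂₄s₃⟩ := exists_sphere_of_not_collinear hn₃
  have hsecant : ¬Collinear ℝ ({s₄.center, p₁₂, s₃.center} : Set P) := by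
    intro hcenter
    have htangent := s₄.two_zsmul_oangle_eq_of_collinear_center hcenter
      (h₂.subset (by simp [Set.insert_subset_iff])) h₁₂s₄ h₁₃s₄ h₂₃s₄ h₁₂s₃ h₁₄s₃ h₂₄s₃
      h₁₂₁₃.symm h₁₃₂₃ h₁₂₂₃ h₁₂₁₄.symm h₁₄₂₄ h₁₂₂₄
    have hsum := two_zsmul_oangle_add_two_zsmul_oangle_of_collinear h₁
      (h₃.subset (by simp [Set.insert_subset_iff])) (h₄.subset (by simp [Set.insert_subset_iff]))
      h₁₃₁₄ h₁₄₃₄ h₁₃₃₄ h₁₂₁₃ h₁₂₁₄ h₁₃₂₃.symm h₂₃₃₄ h₁₄₂₄.symm h₂₄₃₄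
    rw [oangle_rev, smul_neg, htangent, neg_add_cancel, eq_comm,
      Real.Angle.two_zsmul_eq_zero_iff, oangle_eq_zero_or_eq_pi_iff_collinear] at hsum
    exact hn₁ (hsum.subset (by simp [Set.insert_subset_iff]))
  obtain ⟨m, hms₄, hms₃, hm₁₂⟩ := s₄.exists_mem_ne_of_not_collinear_center h₁₂s₄ h₁₂s₃ hsecant
  have hm₁₃ : m ≠ p₁₃ := by
    rintro rfl; exact s₃.not_collinear_of_mem h₁₂s₃ hms₃ h₁₄s₃ h₁₂₁₃ h₁₂₁₄ h₁₃₁₄ h₁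
  have hm₁₄ : m ≠ p₁₄ := by
    rintro rfl; exact s₄.not_collinear_of_mem h₁₂s₄ h₁₃s₄ hms₄ h₁₂₁₃ h₁₂₁₄ h₁₃₁₄ h₁
  have hm₂₃ : m ≠ p₂₃ := by
    rintro rfl; exact s₃.not_collinear_of_mem h₁₂s₃ hms₃ h₂₄s₃ h₁₂₂₃ h₁₂₂₄ h₂₃₂₄ h₂
  have hm₂₄ : m ≠ p₂₄ := by
    rintro rfl; exact s₄.not_collinear_of_mem h₁₂s₄ h₂₃s₄ hms₄ h₁₂₂₃ h₁₂₂₄ h₂₃₂₄ h₂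
  have hc₄ : Cospherical ({p₁₂, p₁₃, p₂₃, m} : Set P) :=
    cospherical_iff_exists_sphere.2 ⟨s₄, by simp [Set.insert_subset_iff, *]⟩
  have hc₃ : Cospherical ({p₁₂, p₁₄, p₂₄, m} : Set P) :=
    cospherical_iff_exists_sphere.2 ⟨s₃, by simp [Set.insert_subset_iff, *]⟩
  refine ⟨m, ?_, hc₄.miquel hc₃ h₂ h₃ h₄ hn₂ hm₁₂ hm₁₃ hm₁₄ h₁₂₂₃.symm h₁₃₂₃.symm h₁₂₂₄.symm
    h₁₄₂₄.symm h₂₃₂₄ h₂₃₃₄ h₂₄₃₄, hc₃, hc₄⟩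
  exact (hc₄.subset (by simp [Set.insert_subset_iff])).miquel
    (hc₃.subset (by simp [Set.insert_subset_iff])) h₁ (h₃.subset (by simp [Set.insert_subset_iff]))
    (h₄.subset (by simp [Set.insert_subset_iff])) hn₁ hm₁₂ hm₂₃ hm₂₄ h₁₂₁₃.symm h₁₃₂₃ h₁₂₁₄.symm
    h₁₄₂₄ h₁₃₁₄ h₁₃₃₄ h₁₄₃₄

end EuclideanGeometry

theorem not_collinear_of_not_concurrent {k V P : Type*} [DivisionRing k]
    [AddCommGroup V] [Module k V] [AddTorsor V P] {l₁ l₂ l₃ : AffineSubspace k P}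
    (h : ¬∃ x, x ∈ l₁ ∧ x ∈ l₂ ∧ x ∈ l₃) {a b c : P} (ha : a ∈ l₁ ∧ a ∈ l₂)
    (hb : b ∈ l₁ ∧ b ∈ l₃) (hc : c ∈ l₂ ∧ c ∈ l₃) : ¬Collinear k ({a, b, c} : Set P) := by
  intro hcol
  have hab : a ≠ b := by
    rintro rfl
    exact h ⟨a, ha.1, ha.2, hb.2⟩
  have hc₁ : c ∈ l₁ := affineSpan_le.2 (by simp [Set.insert_subset_iff, ha.1, hb.1])
    (hcol.mem_affineSpan_of_mem_of_ne (by simp) (by simp) (by simp) hab)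
  exact h ⟨c, hc₁, hc.1, hc.2⟩

theorem miquel_steiner_complete_quadrilateral_general
    (l₁ l₂ l₃ l₄ : AffineSubspace ℝ (EuclideanSpace ℝ (Fin 2)))
    (hl₁ : ∃ p q : EuclideanSpace ℝ (Fin 2), p ≠ q ∧ l₁ = line[ℝ, p, q])
    (hl₂ : ∃ p q : EuclideanSpace ℝ (Fin 2), p ≠ q ∧ l₂ = line[ℝ, p, q])
    (hl₃ : ∃ p q : EuclideanSpace ℝ (Fin 2), p ≠ q ∧ l₃ = line[ℝ, p, q])
    (hl₄ : ∃ p q : EuclideanSpace ℝ (Fin 2), p ≠ q ∧ l₄ = line[ℝ, p, q])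
    (hc₁₂₃ : ¬ ∃ x, x ∈ l₁ ∧ x ∈ l₂ ∧ x ∈ l₃)
    (hc₁₂₄ : ¬ ∃ x, x ∈ l₁ ∧ x ∈ l₂ ∧ x ∈ l₄)
    (hc₁₃₄ : ¬ ∃ x, x ∈ l₁ ∧ x ∈ l₃ ∧ x ∈ l₄)
    (hc₂₃₄ : ¬ ∃ x, x ∈ l₂ ∧ x ∈ l₃ ∧ x ∈ l₄)
    (P₁₂ P₁₃ P₁₄ P₂₃ P₂₄ P₃₄ : EuclideanSpace ℝ (Fin 2))
    (hP₁₂ : P₁₂ ∈ l₁ ∧ P₁₂ ∈ l₂) (hP₁₃ : P₁₃ ∈ l₁ ∧ P₁₃ ∈ l₃)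
    (hP₁₄ : P₁₄ ∈ l₁ ∧ P₁₄ ∈ l₄) (hP₂₃ : P₂₃ ∈ l₂ ∧ P₂₃ ∈ l₃)
    (hP₂₄ : P₂₄ ∈ l₂ ∧ P₂₄ ∈ l₄) (hP₃₄ : P₃₄ ∈ l₃ ∧ P₃₄ ∈ l₄) :
    ∃ M : EuclideanSpace ℝ (Fin 2),
      Cospherical ({P₂₃, P₂₄, P₃₄, M} : Set (EuclideanSpace ℝ (Fin 2))) ∧
      Cospherical ({P₁₃, P₁₄, P₃₄, M} : Set (EuclideanSpace ℝ (Fin 2))) ∧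
      Cospherical ({P₁₂, P₁₄, P₂₄, M} : Set (EuclideanSpace ℝ (Fin 2))) ∧
      Cospherical ({P₁₂, P₁₃, P₂₃, M} : Set (EuclideanSpace ℝ (Fin 2))) := by
  have : Fact (finrank ℝ (EuclideanSpace ℝ (Fin 2)) = 2) := ⟨finrank_euclideanSpace_fin⟩
  obtain ⟨_, _, -, rfl⟩ := hl₁
  obtain ⟨_, _, -, rfl⟩ := hl₂
  obtain ⟨_, _, -, rfl⟩ := hl₃
  obtain ⟨_, _, -, rfl⟩ := hl₄
  exact exists_miquel_point
    (collinear_triple_of_mem_affineSpan_pair hP₁₂.1 hP₁₃.1 hP₁₄.1)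
    (collinear_triple_of_mem_affineSpan_pair hP₁₂.2 hP₂₃.1 hP₂₄.1)
    (collinear_triple_of_mem_affineSpan_pair hP₁₃.2 hP₂₃.2 hP₃₄.1)
    (collinear_triple_of_mem_affineSpan_pair hP₁₄.2 hP₂₄.2 hP₃₄.2)
    (not_collinear_of_not_concurrent hc₂₃₄ hP₂₃ hP₂₄ hP₃₄)
    (not_collinear_of_not_concurrent hc₁₃₄ hP₁₃ hP₁₄ hP₃₄)
    (not_collinear_of_not_concurrent hc₁₂₄ hP₁₂ hP₁₄ hP₂₄)
    (not_collinear_of_not_concurrent hc₁₂₃ hP₁₂ hP₁₃ hP₂₃)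

/-- **Miquel–Steiner point of a complete quadrilateral.**
Given four distinct, pairwise non-parallel lines in the Euclidean plane, no three of
which pass through a common point, with `P i j` the intersection point of lines `i`
and `j`, the circumcircles of the four triangles obtained by omitting each line in
turn have a common point. -/
theorem miquel_steiner_complete_quadrilateral
    (l₁ l₂ l₃ l₄ : AffineSubspace ℝ (EuclideanSpace ℝ (Fin 2)))
    (hl₁ : ∃ p q : EuclideanSpace ℝ (Fin 2), p ≠ q ∧ l₁ = line[ℝ, p, q])
    (hl₂ : ∃ p q : EuclideanSpace ℝ (Fin 2), p ≠ q ∧ l₂ = line[ℝ, p, q])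
    (hl₃ : ∃ p q : EuclideanSpace ℝ (Fin 2), p ≠ q ∧ l₃ = line[ℝ, p, q])
    (hl₄ : ∃ p q : EuclideanSpace ℝ (Fin 2), p ≠ q ∧ l₄ = line[ℝ, p, q])
    (hd₁₂ : l₁ ≠ l₂) (hd₁₃ : l₁ ≠ l₃) (hd₁₄ : l₁ ≠ l₄)
    (hd₂₃ : l₂ ≠ l₃) (hd₂₄ : l₂ ≠ l₄) (hd₃₄ : l₃ ≠ l₄)
    (hp₁₂ : ¬ AffineSubspace.Parallel l₁ l₂) (hp₁₃ : ¬ AffineSubspace.Parallel l₁ l₃)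
    (hp₁₄ : ¬ AffineSubspace.Parallel l₁ l₄) (hp₂₃ : ¬ AffineSubspace.Parallel l₂ l₃)
    (hp₂₄ : ¬ AffineSubspace.Parallel l₂ l₄) (hp₃₄ : ¬ AffineSubspace.Parallel l₃ l₄)
    (hc₁₂₃ : ¬ ∃ x, x ∈ l₁ ∧ x ∈ l₂ ∧ x ∈ l₃)
    (hc₁₂₄ : ¬ ∃ x, x ∈ l₁ ∧ x ∈ l₂ ∧ x ∈ l₄)
    (hc₁₃₄ : ¬ ∃ x, x ∈ l₁ ∧ x ∈ l₃ ∧ x ∈ l₄)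
    (hc₂₃₄ : ¬ ∃ x, x ∈ l₂ ∧ x ∈ l₃ ∧ x ∈ l₄)
    (P₁₂ P₁₃ P₁₄ P₂₃ P₂₄ P₃₄ : EuclideanSpace ℝ (Fin 2))
    (hP₁₂ : P₁₂ ∈ l₁ ∧ P₁₂ ∈ l₂) (hP₁₃ : P₁₃ ∈ l₁ ∧ P₁₃ ∈ l₃)
    (hP₁₄ : P₁₄ ∈ l₁ ∧ P₁₄ ∈ l₄) (hP₂₃ : P₂₃ ∈ l₂ ∧ P₂₃ ∈ l₃)
    (hP₂₄ : P₂₄ ∈ l₂ ∧ P₂₄ ∈ l₄) (hP₃₄ : P₃₄ ∈ l₃ ∧ P₃₄ ∈ l₄) :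
    ∃ M : EuclideanSpace ℝ (Fin 2),
      Cospherical ({P₂₃, P₂₄, P₃₄, M} : Set (EuclideanSpace ℝ (Fin 2))) ∧
      Cospherical ({P₁₃, P₁₄, P₃₄, M} : Set (EuclideanSpace ℝ (Fin 2))) ∧
      Cospherical ({P₁₂, P₁₄, P₂₄, M} : Set (EuclideanSpace ℝ (Fin 2))) ∧
      Cospherical ({P₁₂, P₁₃, P₂₃, M} : Set (EuclideanSpace ℝ (Fin 2))) :=
  miquel_steiner_complete_quadrilateral_general l₁ l₂ l₃ l₄ hl₁ hl₂ hl₃ hl₄ hc₁₂₃ hc₁₂₄ hc₁₃₄ hc₂₃₄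
    P₁₂ P₁₃ P₁₄ P₂₃ P₂₄ P₃₄ hP₁₂ hP₁₃ hP₁₄ hP₂₃ hP₂₄ hP₃₄
end

section
/- Given a triangle ABC and a cevian pair (B_A, C_A) from A with cevian intersection point N_A and Miquel–Steiner point M_A, the point M_A lies on line BC if and only if the four points A, B_A, C_A, N_A are concyclic. -/
/-!
Work with oriented angles modulo `π`, i.e. with `2 • ∡`. Since `M_A` lies on the circles
`A B B_A` and `C B_A N_A`, the angle `∡ B M_A C` splits at `B_A` into the inscribed angles
`∡ B A B_A` and `∡ B_A N_A C`, that is, into the angle between the lines `AB`, `AC` plus the angle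
between the cevians `BB_A`, `CC_A`. Angle sums in the triangles `A B_A B` and `B C_A N_A` turn this
into `∡ A C_A N_A - ∡ A B_A N_A`. So `M_A ∈ BC` iff that difference vanishes, which is the
inscribed angle criterion for `A, B_A, C_A, N_A` to be concyclic.
-/

open EuclideanGeometry

/-- `(B_A, C_A)` is a cevian pair from `A` in triangle `ABC`: `B_A` lies on line `AC`
with `B_A ∉ {A, C}`, `C_A` lies on line `AB` with `C_A ∉ {A, B}`, and the lines
`B B_A` and `C C_A` are not parallel. -/
def IsCevianPair (A B C B_A C_A : EuclideanSpace ℝ (Fin 2)) : Prop :=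
  B_A ∈ line[ℝ, A, C] ∧ B_A ≠ A ∧ B_A ≠ C ∧
  C_A ∈ line[ℝ, A, B] ∧ C_A ≠ A ∧ C_A ≠ B ∧
  ¬ AffineSubspace.Parallel (line[ℝ, B, B_A]) (line[ℝ, C, C_A])

/-- `M` is a Miquel–Steiner point of the cevian pair `(B_A, C_A)` from `A` with cevian
intersection point `N_A`: it lies on the circumcircles of the four triangles
`A B B_A`, `A C C_A`, `C B_A N_A`, `B C_A N_A`. -/
def IsMiquelPoint (A B C B_A C_A N_A M : EuclideanSpace ℝ (Fin 2)) : Prop :=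
  Cospherical ({A, B, B_A, M} : Set (EuclideanSpace ℝ (Fin 2))) ∧
  Cospherical ({A, C, C_A, M} : Set (EuclideanSpace ℝ (Fin 2))) ∧
  Cospherical ({C, B_A, N_A, M} : Set (EuclideanSpace ℝ (Fin 2))) ∧
  Cospherical ({B, C_A, N_A, M} : Set (EuclideanSpace ℝ (Fin 2)))

namespace EuclideanGeometry

variable {V P : Type*} [NormedAddCommGroup V] [InnerProductSpace ℝ V] [MetricSpace P]
  [NormedAddTorsor V P]

theorem Cospherical.notMem_of_mem_affineSpan_pair {s : Set P} (hs : Cospherical s)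
    {p₁ p₂ p₃ : P} (h₁ : p₁ ∈ s) (h₂ : p₂ ∈ s) (hp₃ : p₃ ∈ line[ℝ, p₁, p₂]) (h₁₂ : p₁ ≠ p₂)
    (h₃₁ : p₃ ≠ p₁) (h₃₂ : p₃ ≠ p₂) : p₃ ∉ s := fun h₃ =>
  affineIndependent_iff_not_collinear_set.mp
    (hs.affineIndependent_of_mem_of_ne h₃ h₁ h₂ h₃₁ h₃₂ h₁₂)
    (collinear_insert_of_mem_affineSpan_pair hp₃)

section OrientedPlane

variable [Fact (Module.finrank ℝ V = 2)] [Module.Oriented ℝ V (Fin 2)]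

theorem two_zsmul_oangle_add_two_zsmul_oangle_add_two_zsmul_oangle_eq_zero {p₁ p₂ p₃ : P}
    (h₂₁ : p₂ ≠ p₁) (h₃₂ : p₃ ≠ p₂) (h₁₃ : p₁ ≠ p₃) :
    (2 : ℤ) • ∡ p₁ p₂ p₃ + (2 : ℤ) • ∡ p₂ p₃ p₁ + (2 : ℤ) • ∡ p₃ p₁ p₂ = 0 := by
  rw [← smul_add, ← smul_add, oangle_add_oangle_add_oangle_eq_pi h₂₁ h₃₂ h₁₃,
    Real.Angle.two_zsmul_coe_pi]

theorem mem_affineSpan_pair_iff_two_zsmul_oangle_eq_zero {p₁ p₂ p₃ : P} (h₁₃ : p₁ ≠ p₃) :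
    p₂ ∈ line[ℝ, p₁, p₃] ↔ (2 : ℤ) • ∡ p₁ p₂ p₃ = 0 := by
  rw [Real.Angle.two_zsmul_eq_zero_iff, oangle_eq_zero_or_eq_pi_iff_collinear]
  refine ⟨fun h => ?_, fun h => h.mem_affineSpan_of_mem_of_ne (by simp) (by simp) (by simp) h₁₃⟩
  rw [Set.insert_comm]
  exact collinear_insert_of_mem_affineSpan_pair h

theorem cospherical_iff_two_zsmul_oangle_eq_of_not_collinear {p₁ p₂ p₃ p₄ : P}
    (hn : ¬Collinear ℝ ({p₁, p₂, p₄} : Set P)) (h₃₁ : p₃ ≠ p₁) (h₃₄ : p₃ ≠ p₄) :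
    Cospherical ({p₁, p₂, p₃, p₄} : Set P) ↔ (2 : ℤ) • ∡ p₁ p₂ p₄ = (2 : ℤ) • ∡ p₁ p₃ p₄ :=
  ⟨fun h => h.two_zsmul_oangle_eq (ne₁₂_of_not_collinear hn).symm (ne₂₃_of_not_collinear hn)
    h₃₁ h₃₄, fun h => cospherical_of_two_zsmul_oangle_eq_of_not_collinear h hn⟩

theorem two_zsmul_oangle_eq_add_of_cospherical {p b x c q m : P}
    (h₁ : Cospherical ({p, b, x, m} : Set P)) (h₂ : Cospherical ({c, x, q, m} : Set P))
    (hpb : p ≠ b) (hpx : p ≠ x) (hqx : q ≠ x) (hqc : q ≠ c) (hmb : m ≠ b) (hmx : m ≠ x)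
    (hmc : m ≠ c) :
    (2 : ℤ) • ∡ b m c = (2 : ℤ) • ∡ b p x + (2 : ℤ) • ∡ x q c := by
  rw [Set.insert_comm, Set.pair_comm] at h₁
  rw [Set.insert_comm, Set.insert_comm c, Set.pair_comm] at h₂
  rw [← oangle_add hmb.symm hmx.symm hmc.symm, smul_add,
    h₁.two_zsmul_oangle_eq hpb hpx hmb hmx, h₂.two_zsmul_oangle_eq hqx hqc hmx hmc]

theorem two_zsmul_oangle_add_two_zsmul_oangle_eq_of_cevians {a b c b' c' n : P}
    (habc : ¬Collinear ℝ ({a, b, c} : Set P)) (hb' : b' ∈ line[ℝ, a, c])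
    (hc' : c' ∈ line[ℝ, a, b]) (hb'a : b' ≠ a) (hc'a : c' ≠ a) (hn₁ : n ∈ line[ℝ, b, b'])
    (hn₂ : n ∈ line[ℝ, c, c']) (hcb'n : ¬Collinear ℝ ({c, b', n} : Set P))
    (hbc'n : ¬Collinear ℝ ({b, c', n} : Set P)) :
    (2 : ℤ) • ∡ b a c + (2 : ℤ) • ∡ b n c = (2 : ℤ) • ∡ a c' n - (2 : ℤ) • ∡ a b' n := by
  have hab := ne₁₂_of_not_collinear habc
  have hac := ne₁₃_of_not_collinear habc
  have hb'b : b' ≠ b := by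
    rintro rfl
    exact habc (collinear_triple_of_mem_affineSpan_pair (left_mem_affineSpan_pair _ _ _) hb'
      (right_mem_affineSpan_pair _ _ _))
  have hb'n := ne₂₃_of_not_collinear hcb'n
  have hcn := ne₁₃_of_not_collinear hcb'n
  have hbc' := ne₁₂_of_not_collinear hbc'n
  have hc'n := ne₂₃_of_not_collinear hbc'n
  have hbn := ne₁₃_of_not_collinear hbc'n
  -- angle sums of the triangles `a b' b` and `b c' n`, each angle moved along the line of its side
  have hsum₁ := two_zsmul_oangle_add_two_zsmul_oangle_add_two_zsmul_oangle_eq_zero hb'a hb'b.symm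
    hab
  rw [(collinear_triple_of_mem_affineSpan_pair (left_mem_affineSpan_pair _ _ _)
      (right_mem_affineSpan_pair _ _ _) hn₁).two_zsmul_oangle_eq_right hb'b.symm hb'n.symm,
    (collinear_triple_of_mem_affineSpan_pair (right_mem_affineSpan_pair _ _ _)
      (left_mem_affineSpan_pair _ _ _) hn₁).two_zsmul_oangle_eq_left hb'b hbn.symm,
    (collinear_insert_of_mem_affineSpan_pair hb').two_zsmul_oangle_eq_right hb'a hac.symm]
    at hsum₁
  have hsum₂ := two_zsmul_oangle_add_two_zsmul_oangle_add_two_zsmul_oangle_eq_zero hbc'.symm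
    hc'n.symm hbn
  rw [(collinear_triple_of_mem_affineSpan_pair (right_mem_affineSpan_pair _ _ _) hc'
      (left_mem_affineSpan_pair _ _ _)).two_zsmul_oangle_eq_left hbc' hc'a.symm,
    (collinear_triple_of_mem_affineSpan_pair (right_mem_affineSpan_pair _ _ _) hn₂
      (left_mem_affineSpan_pair _ _ _)).two_zsmul_oangle_eq_left hc'n hcn,
    (collinear_triple_of_mem_affineSpan_pair hc' (right_mem_affineSpan_pair _ _ _)
      (left_mem_affineSpan_pair _ _ _)).two_zsmul_oangle_eq_right hbc'.symm hab,
    oangle_rev b n c, smul_neg] at hsum₂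
  linear_combination (norm := module) hsum₁ - hsum₂

theorem two_zsmul_oangle_eq_of_cospherical_of_cevians {a b c b' c' n m : P}
    (habc : ¬Collinear ℝ ({a, b, c} : Set P)) (hb' : b' ∈ line[ℝ, a, c])
    (hc' : c' ∈ line[ℝ, a, b]) (hb'a : b' ≠ a) (hc'a : c' ≠ a) (hn₁ : n ∈ line[ℝ, b, b'])
    (hn₂ : n ∈ line[ℝ, c, c']) (hcb'n : ¬Collinear ℝ ({c, b', n} : Set P))
    (hbc'n : ¬Collinear ℝ ({b, c', n} : Set P)) (h₁ : Cospherical ({a, b, b', m} : Set P))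
    (h₂ : Cospherical ({a, c, c', m} : Set P)) (h₃ : Cospherical ({c, b', n, m} : Set P)) :
    (2 : ℤ) • ∡ b m c = (2 : ℤ) • ∡ a c' n - (2 : ℤ) • ∡ a b' n := by
  have hab := ne₁₂_of_not_collinear habc
  have hac := ne₁₃_of_not_collinear habc
  have hb'c := (ne₁₂_of_not_collinear hcb'n).symm
  have hbc' := ne₁₂_of_not_collinear hbc'n
  have hmb : m ≠ b := by
    rintro rfl
    exact h₂.notMem_of_mem_affineSpan_pair (by simp) (by simp) hc' hab hc'a hbc'.symm (by simp)
  have hmc : m ≠ c := by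
    rintro rfl
    exact h₁.notMem_of_mem_affineSpan_pair (by simp) (by simp) hb' hac hb'a hb'c (by simp)
  have hmb' : m ≠ b' := by
    rintro rfl
    exact h₂.notMem_of_mem_affineSpan_pair (by simp) (by simp) hb' hac hb'a hb'c (by simp)
  rw [two_zsmul_oangle_eq_add_of_cospherical h₁ h₃ hab hb'a.symm (ne₂₃_of_not_collinear hcb'n).symm
      (ne₁₃_of_not_collinear hcb'n).symm hmb hmb' hmc,
    (collinear_insert_of_mem_affineSpan_pair hb').two_zsmul_oangle_eq_right hb'a hac.symm,
    (collinear_triple_of_mem_affineSpan_pair (right_mem_affineSpan_pair _ _ _) hn₁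
      (left_mem_affineSpan_pair _ _ _)).two_zsmul_oangle_eq_left (ne₂₃_of_not_collinear hcb'n)
      (ne₁₃_of_not_collinear hbc'n)]
  exact two_zsmul_oangle_add_two_zsmul_oangle_eq_of_cevians habc hb' hc' hb'a hc'a hn₁ hn₂ hcb'n
    hbc'n

end OrientedPlane

end EuclideanGeometry

/-- The Miquel–Steiner point `M_A` lies on line `BC` if and only if the four points
`A`, `B_A`, `C_A`, `N_A` are concyclic. -/
theorem miquel_point_mem_line_BC_iff_concyclic
    (A B C B_A C_A N_A M_A : EuclideanSpace ℝ (Fin 2))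
    (hABC : AffineIndependent ℝ ![A, B, C])
    (hcev : IsCevianPair A B C B_A C_A)
    (hN₁ : N_A ∈ line[ℝ, B, B_A]) (hN₂ : N_A ∈ line[ℝ, C, C_A])
    (hCBN : AffineIndependent ℝ ![C, B_A, N_A])
    (hBCN : AffineIndependent ℝ ![B, C_A, N_A])
    (hM : IsMiquelPoint A B C B_A C_A N_A M_A) :
    M_A ∈ line[ℝ, B, C] ↔
      Cospherical ({A, B_A, C_A, N_A} : Set (EuclideanSpace ℝ (Fin 2))) := by
  have : Fact (Module.finrank ℝ (EuclideanSpace ℝ (Fin 2)) = 2) := ⟨finrank_euclideanSpace_fin⟩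
  have : Module.Oriented ℝ (EuclideanSpace ℝ (Fin 2)) (Fin 2) :=
    ⟨(EuclideanSpace.basisFun (Fin 2) ℝ).toBasis.orientation⟩
  obtain ⟨hB_A, hB_AA, -, hC_A, hC_AA, -, -⟩ := hcev
  obtain ⟨h₁, h₂, h₃, -⟩ := hM
  rw [affineIndependent_iff_not_collinear_set] at hABC hCBN hBCN
  have hAB_AN : ¬Collinear ℝ ({A, B_A, N_A} : Set (EuclideanSpace ℝ (Fin 2))) := by
    intro h
    have hN : N_A ∈ line[ℝ, A, C] := affineSpan_pair_eq_of_right_mem_of_ne hB_A hB_AA ▸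
      h.mem_affineSpan_of_mem_of_ne (by simp) (by simp) (by simp) hB_AA.symm
    exact hCBN (collinear_triple_of_mem_affineSpan_pair (right_mem_affineSpan_pair _ _ _) hB_A hN)
  rw [mem_affineSpan_pair_iff_two_zsmul_oangle_eq_zero (ne₂₃_of_not_collinear hABC),
    two_zsmul_oangle_eq_of_cospherical_of_cevians hABC hB_A hC_A hB_AA hC_AA hN₁ hN₂ hCBN hBCN
      h₁ h₂ h₃, sub_eq_zero, eq_comm, cospherical_iff_two_zsmul_oangle_eq_of_not_collinear hAB_AN
      hC_AA (ne₂₃_of_not_collinear hBCN)]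
end

section
/- Let ABC be a triangle, let B_A be a point on line AC with B_A ∉ {A, C}, and let C_A be a point on line AB with C_A ∉ {A, B}. If the lines B B_A and C C_A are parallel, then the circumcircles of triangles A B B_A and A C C_A are tangent to each other at A; that is, the intersection of these two circles is exactly the single point A. -/
/-!
The triangles `A B B_A` and `A C_A C` have pairwise parallel sides, so the homothety centred at
`A` that maps `B` to `C_A` also maps `B_A` to `C`. It carries `ω₁` onto a circle through `A`,
`C_A` and `C`, which must be `ω₂`. Its ratio is not `1` since `C_A ≠ B`, so the centres of `ω₁`
and `ω₂` are distinct and collinear with `A`: both circles are tangent at `A` to the line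
through `A` perpendicular to the line of centres, and meet nowhere else.
-/

open EuclideanGeometry Affine AffineMap Module

section Homothetic

variable {k V P : Type*} [Field k] [AddCommGroup V] [Module k V] [AddTorsor V P]

theorem AffineIndependent.notMem_affineSpan_pair {p₁ p₂ p₃ : P}
    (h : AffineIndependent k ![p₁, p₂, p₃]) : p₃ ∉ line[k, p₁, p₂] := fun hp ↦ by
  refine affineIndependent_iff_not_collinear_set.1 h ?_
  rw [Set.pair_comm, Set.insert_comm]
  exact collinear_insert_of_mem_affineSpan_pair hp

theorem exists_homothety_eq_of_parallel {A B C B' C' : P} (hB : B ∉ line[k, A, C])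
    (hB' : B' ∈ line[k, A, C]) (hB'A : B' ≠ A) (hC' : C' ∈ line[k, A, B]) (hC'A : C' ≠ A)
    (hpar : line[k, B, B'] ∥ line[k, C, C']) :
    ∃ r : k, homothety A r B = C' ∧ homothety A r B' = C := by
  have hAB' : line[k, A, B'] = line[k, A, C] := affineSpan_pair_eq_of_right_mem_of_ne hB' hB'A
  have hAC' : line[k, A, C'] = line[k, A, B] := affineSpan_pair_eq_of_right_mem_of_ne hC' hC'A
  obtain ⟨r, -, hrB, -, hrB'⟩ := exists_eq_smul_of_parallel (p₄ := A) (p₅ := C') (p₆ := C)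
    (hAB' ▸ hB) (hAC' ▸ AffineSubspace.Parallel.refl _)
    (by rw [hpar.direction_eq, AffineSubspace.affineSpan_pair_comm])
    (by rw [AffineSubspace.affineSpan_pair_comm (p₁ := B'), hAB',
      AffineSubspace.affineSpan_pair_comm])
  refine ⟨r, ?_, ?_⟩
  · rw [homothety_apply, ← hrB, vsub_vadd]
  · rw [homothety_apply, ← neg_vsub_eq_vsub_rev A B', smul_neg, ← hrB', neg_vsub_eq_vsub_rev,
      vsub_vadd]

end Homothetic

theorem dist_homothety_homothety {𝕜 V P : Type*} [NormedField 𝕜] [SeminormedAddCommGroup V]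
    [NormedSpace 𝕜 V] [PseudoMetricSpace P] [NormedAddTorsor V P] (c x y : P) (t : 𝕜) :
    dist (homothety c t x) (homothety c t y) = ‖t‖ * dist x y := by
  rw [dist_eq_norm_vsub V, ← linearMap_vsub, homothety_linear, LinearMap.smul_apply,
    LinearMap.id_apply, norm_smul, dist_eq_norm_vsub V]

namespace EuclideanGeometry.Sphere

variable {V P : Type*} [NormedAddCommGroup V] [InnerProductSpace ℝ V] [MetricSpace P]
  [NormedAddTorsor V P]

def homothety (s : Sphere P) (c : P) (t : ℝ) : Sphere P :=
  ⟨AffineMap.homothety c t s.center, |t| * s.radius⟩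

theorem homothety_mem_homothety {s : Sphere P} {x : P} (hx : x ∈ s) (c : P) (t : ℝ) :
    AffineMap.homothety c t x ∈ s.homothety c t := by
  rw [mem_sphere, homothety, dist_homothety_homothety, Real.norm_eq_abs, mem_sphere.1 hx]

theorem inter_homothety_eq_singleton {s : Sphere P} {p : P} (hp : p ∈ s) {t : ℝ} (ht : t ≠ 1) :
    (s : Set P) ∩ s.homothety p t = {p} := by
  have hp' : p ∈ s.homothety p t := by
    simpa [homothety_apply_same] using homothety_mem_homothety hp p t
  refine Set.eq_singleton_iff_unique_mem.2 ⟨⟨hp, hp'⟩, fun x ⟨hx, hx'⟩ ↦ ?_⟩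
  have hperp := inner_vsub_vsub_of_dist_eq_of_dist_eq (hp.trans hx.symm) (hp'.trans hx'.symm)
  have hcenter : AffineMap.homothety p t s.center -ᵥ s.center = (1 - t) • (p -ᵥ s.center) := by
    rw [homothety_apply, vadd_vsub_assoc, ← neg_vsub_eq_vsub_rev s.center p]
    module
  rw [homothety, hcenter, inner_smul_left] at hperp
  have hx_orth : x ∈ s.orthRadius p := mem_orthRadius_iff_inner_right.2 <| by
    simpa [sub_eq_zero, Ne.symm ht] using hperp
  exact (isTangentAt_orthRadius_iff_mem.2 hp).eq_of_mem_of_mem hx hx_orth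

theorem eq_of_mem_of_mem_of_mem_of_finrank_eq_two [FiniteDimensional ℝ V] (hd : finrank ℝ V = 2)
    {s₁ s₂ : Sphere P} {p₁ p₂ p₃ : P} (h₁₂ : p₁ ≠ p₂) (h₁₃ : p₁ ≠ p₃) (h₂₃ : p₂ ≠ p₃)
    (hp₁s₁ : p₁ ∈ s₁) (hp₂s₁ : p₂ ∈ s₁) (hp₃s₁ : p₃ ∈ s₁) (hp₁s₂ : p₁ ∈ s₂) (hp₂s₂ : p₂ ∈ s₂)
    (hp₃s₂ : p₃ ∈ s₂) : s₁ = s₂ := by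
  by_contra hs
  obtain h | h := eq_of_mem_sphere_of_mem_sphere_of_finrank_eq_two hd hs h₁₂ hp₁s₁ hp₂s₁ hp₃s₁
    hp₁s₂ hp₂s₂ hp₃s₂
  · exact h₁₃ h.symm
  · exact h₂₃ h.symm

end EuclideanGeometry.Sphere

theorem circumcircles_tangent_of_parallel_cevians_general
    (A B C B_A C_A : EuclideanSpace ℝ (Fin 2))
    (hABC : AffineIndependent ℝ ![A, B, C])
    (hB_A : B_A ∈ line[ℝ, A, C]) (hB_A1 : B_A ≠ A)
    (hC_A : C_A ∈ line[ℝ, A, B]) (hC_A1 : C_A ≠ A) (hC_A2 : C_A ≠ B)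
    (hpar : AffineSubspace.Parallel (line[ℝ, B, B_A]) (line[ℝ, C, C_A]))
    (ω₁ ω₂ : Sphere (EuclideanSpace ℝ (Fin 2)))
    (hω₁ : A ∈ ω₁ ∧ B ∈ ω₁ ∧ B_A ∈ ω₁)
    (hω₂ : A ∈ ω₂ ∧ C ∈ ω₂ ∧ C_A ∈ ω₂) :
    {x : EuclideanSpace ℝ (Fin 2) | x ∈ ω₁ ∧ x ∈ ω₂} = {A} := by
  obtain ⟨r, hrB, hrB_A⟩ := exists_homothety_eq_of_parallel hABC.comm_right.notMem_affineSpan_pair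
    hB_A hB_A1 hC_A hC_A1 hpar
  have hr : r ≠ 1 := by
    rintro rfl
    exact hC_A2 (by simpa [homothety_one] using hrB.symm)
  have hω : ω₁.homothety A r = ω₂ := by
    refine Sphere.eq_of_mem_of_mem_of_mem_of_finrank_eq_two finrank_euclideanSpace_fin
      (hABC.injective.ne (by decide : (0 : Fin 3) ≠ 2)) hC_A1.symm
      (fun h : C = C_A ↦ hABC.notMem_affineSpan_pair (h ▸ hC_A)) ?_ ?_ ?_ hω₂.1 hω₂.2.1 hω₂.2.2
    · simpa [homothety_apply_same] using ω₁.homothety_mem_homothety hω₁.1 A r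
    · exact hrB_A ▸ ω₁.homothety_mem_homothety hω₁.2.2 A r
    · exact hrB ▸ ω₁.homothety_mem_homothety hω₁.2.1 A r
  rw [← hω, ← ω₁.inter_homothety_eq_singleton hω₁.1 hr]
  rfl

/-- If the cevians `B B_A` and `C C_A` are parallel, then the circumcircles of
triangles `A B B_A` and `A C C_A` are tangent to each other at `A`: their
intersection is exactly the single point `A`. -/
theorem circumcircles_tangent_of_parallel_cevians
    (A B C B_A C_A : EuclideanSpace ℝ (Fin 2))
    (hABC : AffineIndependent ℝ ![A, B, C])
    (hB_A : B_A ∈ line[ℝ, A, C]) (hB_A1 : B_A ≠ A) (hB_A2 : B_A ≠ C)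
    (hC_A : C_A ∈ line[ℝ, A, B]) (hC_A1 : C_A ≠ A) (hC_A2 : C_A ≠ B)
    (hpar : AffineSubspace.Parallel (line[ℝ, B, B_A]) (line[ℝ, C, C_A]))
    (ω₁ ω₂ : Sphere (EuclideanSpace ℝ (Fin 2)))
    (hω₁ : A ∈ ω₁ ∧ B ∈ ω₁ ∧ B_A ∈ ω₁)
    (hω₂ : A ∈ ω₂ ∧ C ∈ ω₂ ∧ C_A ∈ ω₂) :
    {x : EuclideanSpace ℝ (Fin 2) | x ∈ ω₁ ∧ x ∈ ω₂} = {A} :=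
  circumcircles_tangent_of_parallel_cevians_general A B C B_A C_A hABC hB_A hB_A1 hC_A hC_A1 hC_A2
    hpar ω₁ ω₂ hω₁ hω₂
end

section
/- Given a triangle ABC and a cevian pair (B_A, C_A) from A with cevian intersection point N_A, there is exactly one point lying on all four circumcircles of the triangles A B B_A, A C C_A, C B_A N_A, B C_A N_A; that is, the Miquel–Steiner point of the pair exists and is unique. -/
open EuclideanGeometry

/-!
In the affine frame `(A; B - A, C - A)` the cevian feet are `B_A = (0, s)` and `C_A = (t, 0)`, and
a circle is the zero set of `‖X - A‖² - φ (X - A) - k` for a linear form `φ`: a quadratic in the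
frame coordinates with fixed Gram part and free linear part. The Miquel point is the second
intersection of the circles `A B B_A` and `A C C_A`, and a direct computation puts it on the circle
`C B_A N_A`; the symmetry `B ↔ C`, `s ↔ t` of the configuration gives the fourth circle.
For uniqueness, the circles `A B B_A` and `C B_A N_A` are distinct (else the collinear points
`A, C, B_A` would be concyclic) and meet at `B_A`, so they share at most one further point; and a
Miquel point is not `B_A`, as the circle `A C C_A` does not pass through `B_A`.
-/

theorem AffineIndependent.linearIndependent_vsub_pair {k W Q : Type*} [Ring k] [AddCommGroup W]
    [Module k W] [AddTorsor W Q] {p₀ p₁ p₂ : Q} (h : AffineIndependent k ![p₀, p₁, p₂]) :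
    LinearIndependent k ![p₁ -ᵥ p₀, p₂ -ᵥ p₀] := by
  rw [affineIndependent_iff_linearIndependent_vsub k _ (0 : Fin 3),
    ← linearIndependent_equiv (finSuccAboveEquiv (0 : Fin 3))] at h
  convert h using 1
  ext i
  fin_cases i <;> rfl

section Affine

variable {V P : Type*} [NormedAddCommGroup V] [InnerProductSpace ℝ V] [MetricSpace P]
  [NormedAddTorsor V P]

theorem EuclideanGeometry.Sphere.eq_of_affineIndependent (hd : Module.finrank ℝ V = 2)
    {p₁ p₂ p₃ : P} (hp : AffineIndependent ℝ ![p₁, p₂, p₃]) {s₁ s₂ : Sphere P}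
    (h₁ : {p₁, p₂, p₃} ⊆ (s₁ : Set P)) (h₂ : {p₁, p₂, p₃} ⊆ (s₂ : Set P)) : s₁ = s₂ := by
  have : FiniteDimensional ℝ V := Module.finite_of_finrank_eq_succ hd
  let T : Affine.Triangle ℝ P := ⟨_, hp⟩
  have htop : affineSpan ℝ (Set.range T.points) = ⊤ := by
    rw [hp.affineSpan_eq_top_iff_card_eq_finrank_add_one, hd]; rfl
  have hrange : Set.range T.points = {p₁, p₂, p₃} := by
    ext x
    simp [T, or_comm, or_left_comm, eq_comm]
  have key : ∀ s : Sphere P, {p₁, p₂, p₃} ⊆ (s : Set P) → s = T.circumsphere := fun s hs =>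
    T.circumsphere_unique_dist_eq.2 s ⟨htop ▸ AffineSubspace.mem_top _ _ _, hrange ▸ hs⟩
  rw [key s₁ h₁, key s₂ h₂]

theorem EuclideanGeometry.not_cospherical_of_mem_affineSpan_pair {p₁ p₂ p : P}
    (hp : p ∈ line[ℝ, p₁, p₂]) (h₁₂ : p₁ ≠ p₂) (h₁ : p ≠ p₁) (h₂ : p ≠ p₂) :
    ¬ Cospherical ({p₁, p₂, p} : Set P) := by
  intro hc
  have hnc := affineIndependent_iff_not_collinear_set.1 (hc.affineIndependent_of_ne h₁₂ h₁.symm h₂.symm)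
  refine hnc ((collinear_insert_of_mem_affineSpan_pair hp).subset ?_)
  simp [Set.insert_subset_iff]

theorem affineIndependent_of_mem_affineSpan_pair {p₁ p₂ p₃ p : P}
    (h : AffineIndependent ℝ ![p₁, p₂, p₃]) (hp : p ∈ line[ℝ, p₁, p₃]) (hp₁ : p ≠ p₁) :
    AffineIndependent ℝ ![p₁, p₂, p] := by
  rw [affineIndependent_iff_not_collinear_set] at h ⊢
  intro hc
  have h₂ : p₂ ∈ line[ℝ, p₁, p₃] :=
    affineSpan_pair_le_of_mem_of_mem (left_mem_affineSpan_pair _ _ _) hp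
      (hc.mem_affineSpan_of_mem_of_ne (by simp) (by simp) (by simp) hp₁.symm)
  refine h ((collinear_insert_of_mem_affineSpan_pair h₂).subset ?_)
  simp [Set.insert_subset_iff]

end Affine

section Frame

variable {V : Type*} [NormedAddCommGroup V] [InnerProductSpace ℝ V]

theorem norm_smul_add_smul_sq (u v : V) (x y : ℝ) :
    ‖x • u + y • v‖ ^ 2 = x ^ 2 * ‖u‖ ^ 2 + 2 * x * y * inner ℝ u v + y ^ 2 * ‖v‖ ^ 2 := by
  rw [norm_add_sq_real, norm_smul, norm_smul, real_inner_smul_left, real_inner_smul_right,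
    mul_pow, mul_pow, Real.norm_eq_abs, Real.norm_eq_abs, sq_abs, sq_abs]
  ring

theorem EuclideanGeometry.cospherical_of_norm_sub_sq_eq [CompleteSpace V] (φ : StrongDual ℝ V)
    (o : V) (k : ℝ) {S : Set V} (h : ∀ p ∈ S, ‖p - o‖ ^ 2 = φ (p - o) + k) : Cospherical S := by
  -- complete the square, writing `φ = ⟪z, ·⟫`
  set z := (InnerProductSpace.toDual ℝ V).symm φ
  refine ⟨o + (2⁻¹ : ℝ) • z, √(k + ‖z‖ ^ 2 / 4), fun p hp => ?_⟩
  have hz : inner ℝ z (p - o) = φ (p - o) := InnerProductSpace.toDual_symm_apply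
  rw [dist_eq_norm, ← Real.sqrt_sq (norm_nonneg _), sub_add_eq_sub_sub, norm_sub_sq_real,
    h p hp, real_inner_smul_right, real_inner_comm, hz, norm_smul, mul_pow, Real.norm_eq_abs,
    sq_abs]
  congr 1
  ring

def framePoint (o u v : V) (q : ℝ × ℝ) : V := o + q.1 • u + q.2 • v

theorem framePoint_swap (o u v : V) (q : ℝ × ℝ) : framePoint o v u q = framePoint o u v q.swap :=
  add_right_comm _ _ _

variable {u v : V}

theorem framePoint_injective (huv : LinearIndependent ℝ ![u, v]) (o : V) :
    Function.Injective (framePoint o u v) := by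
  intro q q' h
  have h0 : (q.1 - q'.1) • u + (q.2 - q'.2) • v = 0 := by
    simp only [framePoint] at h
    linear_combination (norm := module) h
  obtain ⟨h1, h2⟩ := LinearIndependent.pair_iff.1 huv _ _ h0
  exact Prod.ext (sub_eq_zero.1 h1) (sub_eq_zero.1 h2)

theorem exists_framePoint_eq (hd : Module.finrank ℝ V = 2) (huv : LinearIndependent ℝ ![u, v])
    (o p : V) : ∃ q, p = framePoint o u v q := by
  let b := basisOfLinearIndependentOfCardEqFinrank huv (by simp [hd])
  refine ⟨(b.repr (p - o) 0, b.repr (p - o) 1), ?_⟩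
  have h := b.sum_repr (p - o)
  rw [Fin.sum_univ_two, coe_basisOfLinearIndependentOfCardEqFinrank] at h
  simp only [framePoint, Matrix.cons_val_zero, Matrix.cons_val_one] at h ⊢
  linear_combination (norm := module) -h

theorem mem_line_framePoint (huv : LinearIndependent ℝ ![u, v]) {o p p₁ p₂ : V}
    {q q₁ q₂ : ℝ × ℝ} (hq : p = framePoint o u v q) (hq₁ : p₁ = framePoint o u v q₁)
    (hq₂ : p₂ = framePoint o u v q₂) (h : p ∈ line[ℝ, p₁, p₂]) :
    (q.1 - q₁.1) * (q₂.2 - q₁.2) = (q.2 - q₁.2) * (q₂.1 - q₁.1) := by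
  rw [← vsub_vadd p p₁, vadd_left_mem_affineSpan_pair] at h
  obtain ⟨r, hr⟩ := h
  have : framePoint o u v q =
      framePoint o u v (q₁.1 + r * (q₂.1 - q₁.1), q₁.2 + r * (q₂.2 - q₁.2)) := by
    subst hq hq₁ hq₂
    simp only [framePoint, vsub_eq_sub] at hr ⊢
    linear_combination (norm := module) -hr
  obtain ⟨h1, h2⟩ := Prod.ext_iff.1 (framePoint_injective huv o this)
  rw [h1, h2]
  ring

theorem cospherical_framePoint_image (hd : Module.finrank ℝ V = 2)
    (huv : LinearIndependent ℝ ![u, v]) (o : V) (P Q k : ℝ) {S : Set (ℝ × ℝ)}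
    (h : ∀ q ∈ S, q.1 ^ 2 * ‖u‖ ^ 2 + 2 * q.1 * q.2 * inner ℝ u v + q.2 ^ 2 * ‖v‖ ^ 2
      = P * q.1 + Q * q.2 + k) :
    Cospherical (framePoint o u v '' S) := by
  have : FiniteDimensional ℝ V := Module.finite_of_finrank_eq_succ hd
  let b := basisOfLinearIndependentOfCardEqFinrank huv (by simp [hd])
  let φ := LinearMap.toContinuousLinearMap (P • b.coord 0 + Q • b.coord 1)
  refine cospherical_of_norm_sub_sq_eq φ o k ?_
  rintro _ ⟨q, hq, rfl⟩
  have hu : φ u = P := by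
    have h0 : b.repr u = Finsupp.single 0 1 := by simpa [b] using b.repr_self 0
    simp [φ, h0]
  have hv : φ v = Q := by
    have h1 : b.repr v = Finsupp.single 1 1 := by simpa [b] using b.repr_self 1
    simp [φ, h1]
  have hq' : framePoint o u v q - o = q.1 • u + q.2 • v := by
    rw [framePoint, add_assoc, add_sub_cancel_left]
  rw [hq', map_add, map_smul, map_smul, hu, hv, smul_eq_mul, smul_eq_mul, norm_smul_add_smul_sq]
  linear_combination h q hq

/-- On the radical axis `(1 - t) ‖u‖² x + (s - 1) ‖v‖² y = 0` of the circles through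
`(0, 0), (1, 0), (0, s)` and through `(0, 0), (0, 1), (t, 0)`, scaled to lie on both. -/
noncomputable def miquelCoord (u v : V) (s t : ℝ) : ℝ × ℝ :=
  ((s * t - 1) / ‖(t - 1) • u + (s - 1) • v‖ ^ 2) • ((s - 1) * ‖v‖ ^ 2, (t - 1) * ‖u‖ ^ 2)

theorem miquelCoord_swap (u v : V) (s t : ℝ) :
    miquelCoord v u t s = (miquelCoord u v s t).swap := by
  simp only [miquelCoord, add_comm ((s - 1) • v), mul_comm t s, Prod.smul_swap, Prod.swap_prod_mk]

theorem cospherical_miquelCoord (hd : Module.finrank ℝ V = 2)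
    (huv : LinearIndependent ℝ ![u, v]) (o : V) {s t : ℝ} {N : ℝ × ℝ} (hs : s ≠ 1)
    (hN₁ : s * N.1 + N.2 = s) (hN₂ : N.1 + t * N.2 = t) :
    Cospherical (framePoint o u v '' {(0, 0), (1, 0), (0, s), miquelCoord u v s t}) ∧
      Cospherical (framePoint o u v '' {(0, 1), (0, s), N, miquelCoord u v s t}) := by
  have hst : s * t - 1 ≠ 0 := by
    intro h
    apply hs
    linear_combination s * hN₂ - hN₁ - (N.2 - 1) * h
  have hE : ‖(t - 1) • u + (s - 1) • v‖ ^ 2 ≠ 0 := by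
    refine pow_ne_zero 2 (norm_ne_zero_iff.2 fun h => hs ?_)
    exact sub_eq_zero.1 (LinearIndependent.pair_iff.1 huv _ _ h).2
  obtain ⟨l, hl, hM⟩ : ∃ l : ℝ, l * ‖(t - 1) • u + (s - 1) • v‖ ^ 2 = s * t - 1 ∧
      miquelCoord u v s t = (l * ((s - 1) * ‖v‖ ^ 2), l * ((t - 1) * ‖u‖ ^ 2)) :=
    ⟨_, div_mul_cancel₀ _ hE, rfl⟩
  rw [norm_smul_add_smul_sq] at hl
  rw [hM]
  set a := ‖u‖ ^ 2
  set c := ‖v‖ ^ 2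
  set d := inner ℝ u v
  constructor
  · refine cospherical_framePoint_image hd huv o a (s * c) 0 ?_
    simp only [Set.mem_insert_iff, Set.mem_singleton_iff]
    rintro q (rfl | rfl | rfl | rfl)
    · ring
    · ring
    · ring
    · linear_combination (l * a * c) * hl
  · -- the `x`-coefficient is the one making the circle through `(0, 1), (0, s)` pass through `N`
    refine cospherical_framePoint_image hd huv o (a * N.1 + 2 * d * N.2 + s * c * (1 - N.2))
      ((1 + s) * c) (-(s * c)) ?_
    simp only [Set.mem_insert_iff, Set.mem_singleton_iff]
    rintro q (rfl | rfl | hq | rfl)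
    · ring
    · ring
    · rw [hq]
      linear_combination c * (N.2 - 1) * hN₁
    · -- `N = (t (s - 1), s (t - 1)) / (s t - 1)`, so the identity needs the factor `s t - 1`
      refine mul_left_cancel₀ hst ?_
      linear_combination ((s * t - 1) * a * c * l - c * s) * hl
        - c * l * (s - 1) * (a * t + s * c - 2 * d) * hN₁
        + c * l * (s - 1) * (s * (s * c - 2 * d) + a) * hN₂

end Frame

theorem isMiquelPoint_framePoint {o u v : EuclideanSpace ℝ (Fin 2)}
    (huv : LinearIndependent ℝ ![u, v]) {s t : ℝ} {N : ℝ × ℝ} (hs : s ≠ 1) (ht : t ≠ 1)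
    (hN₁ : s * N.1 + N.2 = s) (hN₂ : N.1 + t * N.2 = t) :
    IsMiquelPoint (framePoint o u v (0, 0)) (framePoint o u v (1, 0)) (framePoint o u v (0, 1))
      (framePoint o u v (0, s)) (framePoint o u v (t, 0)) (framePoint o u v N)
      (framePoint o u v (miquelCoord u v s t)) := by
  have hd : Module.finrank ℝ (EuclideanSpace ℝ (Fin 2)) = 2 := finrank_euclideanSpace_fin
  obtain ⟨h₁, h₃⟩ := cospherical_miquelCoord hd huv o hs hN₁ hN₂
  obtain ⟨h₂, h₄⟩ := cospherical_miquelCoord hd (LinearIndependent.pair_symm_iff.1 huv) o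
    (N := N.swap) ht (by simpa [add_comm] using hN₂) (by simpa [add_comm] using hN₁)
  simp only [Set.image_insert_eq, Set.image_singleton, framePoint_swap o u v,
    miquelCoord_swap u v, Prod.swap_prod_mk, Prod.swap_swap] at h₁ h₂ h₃ h₄
  exact ⟨h₁, h₂, h₃, h₄⟩

theorem IsMiquelPoint.unique {A B C B_A C_A N_A M M' : EuclideanSpace ℝ (Fin 2)}
    (hABB : AffineIndependent ℝ ![A, B, B_A]) (hCBN : AffineIndependent ℝ ![C, B_A, N_A])
    (hACB : ¬ Cospherical ({A, C, B_A} : Set (EuclideanSpace ℝ (Fin 2))))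
    (hM : IsMiquelPoint A B C B_A C_A N_A M) (hM' : IsMiquelPoint A B C B_A C_A N_A M') :
    M' = M := by
  have hd : Module.finrank ℝ (EuclideanSpace ℝ (Fin 2)) = 2 := finrank_euclideanSpace_fin
  have hne : ∀ {X}, IsMiquelPoint A B C B_A C_A N_A X → X ≠ B_A := by
    rintro X hX rfl
    exact hACB (hX.2.1.subset (by simp [Set.insert_subset_iff]))
  obtain ⟨s₁, hs₁⟩ := cospherical_iff_exists_sphere.1 hM.1
  obtain ⟨s₃, hs₃⟩ := cospherical_iff_exists_sphere.1 hM.2.2.1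
  obtain ⟨s₁', hs₁'⟩ := cospherical_iff_exists_sphere.1 hM'.1
  obtain ⟨s₃', hs₃'⟩ := cospherical_iff_exists_sphere.1 hM'.2.2.1
  obtain rfl : s₁ = s₁' := Sphere.eq_of_affineIndependent hd hABB
    (.trans (by simp [Set.insert_subset_iff]) hs₁) (.trans (by simp [Set.insert_subset_iff]) hs₁')
  obtain rfl : s₃ = s₃' := Sphere.eq_of_affineIndependent hd hCBN
    (.trans (by simp [Set.insert_subset_iff]) hs₃) (.trans (by simp [Set.insert_subset_iff]) hs₃')
  simp only [Set.insert_subset_iff, Set.singleton_subset_iff, Sphere.mem_coe] at hs₁ hs₃ hs₁' hs₃'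
  have hs₁₃ : s₁ ≠ s₃ := by
    rintro rfl
    refine hACB (cospherical_iff_exists_sphere.2 ⟨s₁, ?_⟩)
    simp only [Set.insert_subset_iff, Set.singleton_subset_iff, Sphere.mem_coe]
    exact ⟨hs₁.1, hs₃.1, hs₁.2.2.1⟩
  exact (eq_of_mem_sphere_of_mem_sphere_of_finrank_eq_two hd hs₁₃ (hne hM).symm hs₁.2.2.1
    hs₁.2.2.2 hs₁'.2.2.2 hs₃.2.1 hs₃.2.2.2 hs₃'.2.2.2).resolve_left (hne hM')

theorem exists_isMiquelPoint {A B C B_A C_A N_A : EuclideanSpace ℝ (Fin 2)}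
    (hABC : AffineIndependent ℝ ![A, B, C]) (hBA : B_A ∈ line[ℝ, A, C]) (hBAC : B_A ≠ C)
    (hCA : C_A ∈ line[ℝ, A, B]) (hCAB : C_A ≠ B)
    (hN₁ : N_A ∈ line[ℝ, B, B_A]) (hN₂ : N_A ∈ line[ℝ, C, C_A]) :
    ∃ M, IsMiquelPoint A B C B_A C_A N_A M := by
  have hd : Module.finrank ℝ (EuclideanSpace ℝ (Fin 2)) = 2 := finrank_euclideanSpace_fin
  have huv : LinearIndependent ℝ ![B - A, C - A] := hABC.linearIndependent_vsub_pair
  set u := B - A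
  set v := C - A
  have hA : A = framePoint A u v (0, 0) := by simp [framePoint]
  have hB : B = framePoint A u v (1, 0) := by simp [framePoint, u]
  have hC : C = framePoint A u v (0, 1) := by simp [framePoint, v]
  clear_value u v
  obtain ⟨⟨x, s⟩, hqBA⟩ := exists_framePoint_eq hd huv A B_A
  obtain ⟨⟨t, y⟩, hqCA⟩ := exists_framePoint_eq hd huv A C_A
  obtain ⟨N, hqN⟩ := exists_framePoint_eq hd huv A N_A
  obtain rfl : x = 0 := by simpa using mem_line_framePoint huv hqBA hA hC hBA
  obtain rfl : y = 0 := by simpa using (mem_line_framePoint huv hqCA hA hB hCA).symm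
  have hN₁' := mem_line_framePoint huv hqN hB hqBA hN₁
  have hN₂' := mem_line_framePoint huv hqN hC hqCA hN₂
  have hs : s ≠ 1 := by rintro rfl; exact hBAC (hqBA.trans hC.symm)
  have ht : t ≠ 1 := by rintro rfl; exact hCAB (hqCA.trans hB.symm)
  have hM := isMiquelPoint_framePoint (o := A) huv hs ht (by linear_combination hN₁')
    (by linear_combination -hN₂')
  rw [← hA, ← hB, ← hC, ← hqBA, ← hqCA, ← hqN] at hM
  exact ⟨_, hM⟩

theorem existsUnique_miquel_point_general
    (A B C B_A C_A N_A : EuclideanSpace ℝ (Fin 2))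
    (hABC : AffineIndependent ℝ ![A, B, C])
    (hcev : IsCevianPair A B C B_A C_A)
    (hN₁ : N_A ∈ line[ℝ, B, B_A]) (hN₂ : N_A ∈ line[ℝ, C, C_A])
    (hCBN : AffineIndependent ℝ ![C, B_A, N_A]) :
    ∃! M_A : EuclideanSpace ℝ (Fin 2), IsMiquelPoint A B C B_A C_A N_A M_A := by
  obtain ⟨hBA, hBAA, hBAC, hCA, -, hCAB, -⟩ := hcev
  obtain ⟨M, hM⟩ := exists_isMiquelPoint hABC hBA hBAC hCA hCAB hN₁ hN₂
  have hABB := affineIndependent_of_mem_affineSpan_pair hABC hBA hBAA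
  have hAC : A ≠ C := hABC.injective.ne (show (0 : Fin 3) ≠ 2 by decide)
  exact ⟨M, hM, fun M' hM' => hM.unique hABB hCBN
    (not_cospherical_of_mem_affineSpan_pair hBA hAC hBAA hBAC) hM'⟩

/-- The Miquel–Steiner point of a cevian pair exists and is unique: there is exactly
one point lying on all four circumcircles of the triangles `A B B_A`, `A C C_A`,
`C B_A N_A`, `B C_A N_A`. -/
theorem existsUnique_miquel_point
    (A B C B_A C_A N_A : EuclideanSpace ℝ (Fin 2))
    (hABC : AffineIndependent ℝ ![A, B, C])
    (hcev : IsCevianPair A B C B_A C_A)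
    (hN₁ : N_A ∈ line[ℝ, B, B_A]) (hN₂ : N_A ∈ line[ℝ, C, C_A])
    (hCBN : AffineIndependent ℝ ![C, B_A, N_A])
    (hBCN : AffineIndependent ℝ ![B, C_A, N_A]) :
    ∃! M_A : EuclideanSpace ℝ (Fin 2), IsMiquelPoint A B C B_A C_A N_A M_A :=
  existsUnique_miquel_point_general A B C B_A C_A N_A hABC hcev hN₁ hN₂ hCBN
end

section
/- Let ABC be a triangle with circumcenter O, let O_{A,B} and O_{A,C} be the centres of the Miquel–Steiner auxiliary circles ω_{A,B} and ω_{A,C} of ABC from A, and let I_A be the main Miquel–Steiner centre of ABC from A. Then the four points O_{A,B}, O_{A,C}, I_A, O are concyclic. -/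
open EuclideanGeometry

/-- The circle `s` is tangent to the affine subspace `L` at `P`: `P` lies on both,
and `s` meets `L` only at `P`. -/
def IsTangentAt (s : Sphere (EuclideanSpace ℝ (Fin 2)))
    (L : AffineSubspace ℝ (EuclideanSpace ℝ (Fin 2))) (P : EuclideanSpace ℝ (Fin 2)) : Prop :=
  P ∈ s ∧ P ∈ L ∧ ∀ x, x ∈ s → x ∈ L → x = P

/-! The centre `P` of `ω_{A,B}` and the circumcentre `O` lie on the perpendicular bisector of
`AC`, while `PA ⊥ AB`; symmetrically, `QO ⊥ AB` and `QA ⊥ AC` for the centre `Q` of `ω_{A,C}`.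
So `OP ∥ AQ` and `OQ ∥ AP`, and the oriented angle `QOP` equals `PAQ` modulo `π`. As `I_A` is
the reflection of `A` in the line of centres `PQ`, the angle `QI_AP` equals `PAQ` too, and the
inscribed angle theorem makes `P, Q, I_A, O` concyclic. -/

open Module
open scoped RealInnerProductSpace

theorem IsTangentAt.inner_center_vsub_eq_zero {s : Sphere (EuclideanSpace ℝ (Fin 2))}
    {A B : EuclideanSpace ℝ (Fin 2)} (ht : IsTangentAt s line[ℝ, A, B] A) :
    ⟪s.center -ᵥ A, B -ᵥ A⟫ = 0 := by
  have h := Sphere.secondInter_eq_self_iff.1 <|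
    ht.2.2 _ ((Sphere.secondInter_mem _).2 ht.1) (s.secondInter_vsub_mem_affineSpan A B)
  rwa [← neg_vsub_eq_vsub_rev A, inner_neg_left, neg_eq_zero, real_inner_comm]

theorem IsTangentAt.center_ne_of_dist_eq {s : Sphere (EuclideanSpace ℝ (Fin 2))}
    {A B X : EuclideanSpace ℝ (Fin 2)} (ht : IsTangentAt s line[ℝ, A, B] A) (hBA : B ≠ A)
    (hX : dist A X = dist B X) : s.center ≠ X := by
  rintro rfl
  exact hBA <| ht.2.2 B (mem_sphere.2 (hX.symm.trans (mem_sphere.1 ht.1)))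
    (right_mem_affineSpan_pair ℝ A B)

namespace Orientation

variable {V : Type*} [NormedAddCommGroup V] [InnerProductSpace ℝ V] [Fact (finrank ℝ V = 2)]
  (o : Orientation ℝ V (Fin 2))

theorem two_zsmul_oangle_eq_of_inner_eq_zero {x y u v : V} (hx : x ≠ 0) (hy : y ≠ 0)
    (hu : u ≠ 0) (hv : v ≠ 0) (hxu : ⟪x, u⟫ = 0) (hyv : ⟪y, v⟫ = 0) :
    (2 : ℤ) • o.oangle x y = (2 : ℤ) • o.oangle u v := by
  rw [real_inner_comm] at hxu hyv
  obtain ⟨a, rfl⟩ :=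
    (o.inner_eq_zero_iff_eq_zero_or_eq_smul_rotation_pi_div_two.1 hxu).resolve_left hu
  obtain ⟨b, rfl⟩ :=
    (o.inner_eq_zero_iff_eq_zero_or_eq_smul_rotation_pi_div_two.1 hyv).resolve_left hv
  have ha : a ≠ 0 := by rintro rfl; simp at hx
  have hb : b ≠ 0 := by rintro rfl; simp at hy
  rw [o.two_zsmul_oangle_smul_left_of_ne_zero _ _ ha,
    o.two_zsmul_oangle_smul_right_of_ne_zero _ _ hb, o.oangle_rotation]

end Orientation

namespace EuclideanGeometry

variable {V P : Type*} [NormedAddCommGroup V] [InnerProductSpace ℝ V] [MetricSpace P]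
  [NormedAddTorsor V P] [Fact (finrank ℝ V = 2)] [Module.Oriented ℝ V (Fin 2)]

theorem two_zsmul_oangle_eq_of_inner_eq_zero {p₁ p₂ p₃ q₁ q₂ q₃ : P} (hp₁ : p₁ ≠ p₂)
    (hp₃ : p₃ ≠ p₂) (hq₁ : q₁ ≠ q₂) (hq₃ : q₃ ≠ q₂) (h₁ : ⟪p₁ -ᵥ p₂, q₁ -ᵥ q₂⟫ = 0)
    (h₃ : ⟪p₃ -ᵥ p₂, q₃ -ᵥ q₂⟫ = 0) : (2 : ℤ) • ∡ p₁ p₂ p₃ = (2 : ℤ) • ∡ q₁ q₂ q₃ :=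
  positiveOrientation.two_zsmul_oangle_eq_of_inner_eq_zero (vsub_ne_zero.2 hp₁)
    (vsub_ne_zero.2 hp₃) (vsub_ne_zero.2 hq₁) (vsub_ne_zero.2 hq₃) h₁ h₃

theorem oangle_eq_neg_oangle_of_dist_eq_of_dist_eq {a i p q : P} (hai : a ≠ i)
    (hp : dist a p = dist i p) (hq : dist a q = dist i q) : ∡ p i q = -∡ p a q := by
  obtain ⟨c, rfl⟩ := (dist_eq_iff_eq_smul_rotation_pi_div_two_vadd_midpoint hai).1 hp
  obtain ⟨d, rfl⟩ := (dist_eq_iff_eq_smul_rotation_pi_div_two_vadd_midpoint hai).1 hq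
  -- `p -ᵥ i` and `p -ᵥ a` are `c • J w ∓ w / 2` with `w = i -ᵥ a`: mirror images in `ℝ • J w`.
  simp only [oangle, vadd_vsub_assoc, midpoint_vsub_left, midpoint_vsub_right]
  rw [← o.oangle_rev, ← neg_vsub_eq_vsub_rev i a, o.rotation_pi_div_two, Orientation.oangle,
    Orientation.oangle]
  congr 2
  simp only [map_add, map_smul, map_neg, LinearMap.add_apply, LinearMap.smul_apply,
    LinearMap.neg_apply, Orientation.kahler_rightAngleRotation_left,
    Orientation.kahler_rightAngleRotation_right, Orientation.kahler_apply_self,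
    LinearIsometryEquiv.norm_map, Complex.real_smul]
  ring

end EuclideanGeometry

/-- The centres `O_{A,B}`, `O_{A,C}` of the Miquel–Steiner auxiliary circles of `ABC`
from `A`, the main Miquel–Steiner centre `I_A`, and the circumcenter `O` are
concyclic. -/
theorem aux_centres_main_centre_circumcenter_concyclic
    (A B C O I_A : EuclideanSpace ℝ (Fin 2))
    (ωAB ωAC : Sphere (EuclideanSpace ℝ (Fin 2)))
    (hABC : AffineIndependent ℝ ![A, B, C])
    (hOA : dist O A = dist O B) (hOB : dist O B = dist O C)
    (hωAB : C ∈ ωAB ∧ IsTangentAt ωAB (line[ℝ, A, B]) A)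
    (hωAC : B ∈ ωAC ∧ IsTangentAt ωAC (line[ℝ, A, C]) A)
    (hIA : I_A ≠ A ∧ I_A ∈ ωAB ∧ I_A ∈ ωAC) :
    Cospherical ({ωAB.center, ωAC.center, I_A, O} : Set (EuclideanSpace ℝ (Fin 2))) := by
  obtain ⟨hC, htB⟩ := hωAB
  obtain ⟨hB, htC⟩ := hωAC
  obtain ⟨hIA, hIB, hIC⟩ := hIA
  set P := ωAB.center
  set Q := ωAC.center
  have hBA : B ≠ A := hABC.injective.ne (by decide : (1 : Fin 3) ≠ 0)
  have hCA : C ≠ A := hABC.injective.ne (by decide : (2 : Fin 3) ≠ 0)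
  have hAOB : dist A O = dist B O := by rw [dist_comm A, dist_comm B, hOA]
  have hAOC : dist A O = dist C O := by rw [dist_comm A, dist_comm C, hOA, hOB]
  have : Fact (finrank ℝ (EuclideanSpace ℝ (Fin 2)) = 2) := ⟨finrank_euclideanSpace_fin⟩
  let _ : Module.Oriented ℝ (EuclideanSpace ℝ (Fin 2)) (Fin 2) :=
    ⟨(EuclideanSpace.basisFun (Fin 2) ℝ).toBasis.orientation⟩
  have hO : (2 : ℤ) • ∡ Q O P = (2 : ℤ) • ∡ B A C :=
    two_zsmul_oangle_eq_of_inner_eq_zero (htC.center_ne_of_dist_eq hCA hAOC)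
      (htB.center_ne_of_dist_eq hBA hAOB) hBA hCA
      (inner_vsub_vsub_of_dist_eq_of_dist_eq hAOB
        (dist_center_eq_dist_center_of_mem_sphere htC.1 hB))
      (inner_vsub_vsub_of_dist_eq_of_dist_eq hAOC
        (dist_center_eq_dist_center_of_mem_sphere htB.1 hC))
  have hA : (2 : ℤ) • ∡ P A Q = (2 : ℤ) • ∡ B A C :=
    two_zsmul_oangle_eq_of_inner_eq_zero
      (Sphere.ne_center_of_mem_of_mem_of_ne htB.1 hC hCA.symm).symm
      (Sphere.ne_center_of_mem_of_mem_of_ne htC.1 hB hBA.symm).symm hBA hCA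
      htB.inner_center_vsub_eq_zero htC.inner_center_vsub_eq_zero
  have hI : ∡ Q I_A P = ∡ P A Q := by
    rw [oangle_eq_neg_oangle_of_dist_eq_of_dist_eq hIA.symm
      (dist_center_eq_dist_center_of_mem_sphere htC.1 hIC)
      (dist_center_eq_dist_center_of_mem_sphere htB.1 hIB), ← oangle_rev]
  have hn : ¬ Collinear ℝ {Q, O, P} := by
    rw [collinear_iff_of_two_zsmul_oangle_eq hO, Set.insert_comm]
    exact affineIndependent_iff_not_collinear_set.1 hABC
  have hOI : (2 : ℤ) • ∡ Q O P = (2 : ℤ) • ∡ Q I_A P := by rw [hO, hI, hA]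
  convert cospherical_of_two_zsmul_oangle_eq_of_not_collinear hOI hn using 1
  ext; simp only [Set.mem_insert_iff, Set.mem_singleton_iff]; tauto
end

section
/- Let ABC be a triangle with circumcenter O, let O_{A,B} and O_{A,C} be the centres of the Miquel–Steiner auxiliary circles ω_{A,B} and ω_{A,C} of ABC from A, and let I_A be the main Miquel–Steiner centre of ABC from A. Then the vector from O_{A,B} to O_{A,C} is orthogonal to the vector from A to I_A, and the vector from O to I_A is orthogonal to the vector from A to I_A; in particular the line O_{A,B} O_{A,C} is parallel to the line O I_A, and the line O I_A is perpendicular to the line A I_A (the Miquel–Steiner axis from A). -/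
open EuclideanGeometry

/-!
The circumcenter is `O = O_{A,B} + O_{A,C} - A`: by tangency `O_{A,B} - A ⟂ AB`, and `O_{A,C}`
lies on the perpendicular bisector of `AB`, so their "sum" does too; symmetrically for `AC`.
Both auxiliary centres lie on the perpendicular bisector of `A I_A`, which gives the first claim
and shows that `I_A - O = (M - O_{A,B}) + (M - O_{A,C})`, with `M` the midpoint of `A I_A`,
is orthogonal to `A I_A`.
-/

open AffineSubspace RealInnerProductSpace Module

section

variable {V P : Type*} [NormedAddCommGroup V] [InnerProductSpace ℝ V] [MetricSpace P]
  [NormedAddTorsor V P]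

theorem AffineIndependent.eq_of_equidistant_of_finrank_eq_two [FiniteDimensional ℝ V]
    (hd : finrank ℝ V = 2) {A B C p q : P} (hABC : AffineIndependent ℝ ![A, B, C])
    (hpAB : dist p A = dist p B) (hpBC : dist p B = dist p C)
    (hqAB : dist q A = dist q B) (hqBC : dist q B = dist q C) : p = q := by
  let t : Affine.Simplex ℝ P 2 := ⟨![A, B, C], hABC⟩
  have eq_circumcenter (x : P) (hAB : dist x A = dist x B) (hBC : dist x B = dist x C) :
      x = t.circumcenter := by
    refine t.eq_circumcenter_of_dist_eq (r := dist x A) ?_ ?_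
    · rw [hABC.affineSpan_eq_top_iff_card_eq_finrank_add_one.2 (by simp [hd])]
      exact AffineSubspace.mem_top ℝ V x
    · intro i
      fin_cases i <;> simp [t, dist_comm _ x, hAB, hBC]
  exact (eq_circumcenter p hpAB hpBC).trans (eq_circumcenter q hqAB hqBC).symm

end

section

variable {V : Type*} [NormedAddCommGroup V] [InnerProductSpace ℝ V]

theorem dist_add_sub_eq_of_inner_eq_zero {A B c₁ c₂ : V} (h₁ : ⟪B - A, A - c₁⟫ = 0)
    (h₂ : dist A c₂ = dist B c₂) : dist (c₁ + c₂ - A) A = dist (c₁ + c₂ - A) B := by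
  rw [← mem_perpBisector_iff_dist_eq'] at h₂
  rw [← mem_perpBisector_iff_dist_eq]
  have hdir : c₁ - A ∈ (perpBisector A B).direction := by
    rw [direction_perpBisector, Submodule.mem_orthogonal_singleton_iff_inner_right,
      vsub_eq_sub, ← neg_sub A c₁, inner_neg_right, h₁, neg_zero]
  rw [show c₁ + c₂ - A = (c₁ - A) +ᵥ c₂ by rw [vadd_eq_add]; abel]
  exact vadd_mem_of_mem_direction hdir h₂

theorem inner_sub_add_sub_eq_zero_of_dist_eq {c₁ c₂ p₁ p₂ : V} (h₁ : dist p₁ c₁ = dist p₂ c₁)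
    (h₂ : dist p₁ c₂ = dist p₂ c₂) : ⟪p₂ - (c₁ + c₂ - p₁), p₂ - p₁⟫ = 0 := by
  rw [← mem_perpBisector_iff_dist_eq'] at h₁ h₂
  have hm := midpoint_mem_perpBisector p₁ p₂
  have hsplit : p₂ - (c₁ + c₂ - p₁) = (midpoint ℝ p₁ p₂ - c₁) + (midpoint ℝ p₁ p₂ - c₂) := by
    rw [midpoint_eq_smul_add, invOf_eq_inv]
    module
  rw [hsplit, ← Submodule.mem_orthogonal_singleton_iff_inner_left, ← vsub_eq_sub p₂ p₁,
    ← direction_perpBisector]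
  exact add_mem (vsub_mem_direction hm h₁) (vsub_mem_direction hm h₂)

end

theorem IsTangentAt.inner_sub_center_eq_zero {s : Sphere (EuclideanSpace ℝ (Fin 2))}
    {A X : EuclideanSpace ℝ (Fin 2)} (h : IsTangentAt s line[ℝ, A, X] A) :
    ⟪X - A, A - s.center⟫ = 0 :=
  Sphere.secondInter_eq_self_iff.1 <|
    h.2.2 _ ((Sphere.secondInter_mem _).2 h.1) (s.secondInter_vsub_mem_affineSpan A X)

/-- The segment joining the auxiliary centres `O_{A,B}`, `O_{A,C}` is orthogonal to
the Miquel–Steiner axis `A I_A`, and the segment from the circumcenter `O` to `I_A`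
is orthogonal to `A I_A`; in particular `O_{A,B} O_{A,C} ∥ O I_A ⟂ A I_A`. -/
theorem aux_centres_parallel_OI_perp_axis
    (A B C O I_A : EuclideanSpace ℝ (Fin 2))
    (ωAB ωAC : Sphere (EuclideanSpace ℝ (Fin 2)))
    (hABC : AffineIndependent ℝ ![A, B, C])
    (hOA : dist O A = dist O B) (hOB : dist O B = dist O C)
    (hωAB : C ∈ ωAB ∧ IsTangentAt ωAB (line[ℝ, A, B]) A)
    (hωAC : B ∈ ωAC ∧ IsTangentAt ωAC (line[ℝ, A, C]) A)
    (hIA : I_A ≠ A ∧ I_A ∈ ωAB ∧ I_A ∈ ωAC) :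
    (inner ℝ (ωAC.center - ωAB.center) (I_A - A) : ℝ) = 0 ∧
    (inner ℝ (I_A - O) (I_A - A) : ℝ) = 0 := by
  obtain ⟨hC, htAB⟩ := hωAB
  obtain ⟨hB, htAC⟩ := hωAC
  obtain ⟨-, hI₁, hI₂⟩ := hIA
  have hAI₁ := dist_center_eq_dist_center_of_mem_sphere htAB.1 hI₁
  have hAI₂ := dist_center_eq_dist_center_of_mem_sphere htAC.1 hI₂
  refine ⟨inner_vsub_vsub_of_dist_eq_of_dist_eq hAI₁ hAI₂, ?_⟩
  have hAB := dist_add_sub_eq_of_inner_eq_zero htAB.inner_sub_center_eq_zero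
    (dist_center_eq_dist_center_of_mem_sphere htAC.1 hB)
  have hAC := dist_add_sub_eq_of_inner_eq_zero htAC.inner_sub_center_eq_zero
    (dist_center_eq_dist_center_of_mem_sphere htAB.1 hC)
  rw [add_comm ωAC.center] at hAC
  have hO : O = ωAB.center + ωAC.center - A :=
    hABC.eq_of_equidistant_of_finrank_eq_two finrank_euclideanSpace_fin hOA hOB hAB
      (hAB.symm.trans hAC)
  rw [hO]
  exact inner_sub_add_sub_eq_zero_of_dist_eq hAI₁ hAI₂
end

section
/- Let ABC be a triangle. Let ω_{A,C} be the circle through A and B tangent to line AC at A, let ω_{B,A} be the circle through B and C tangent to line BA at B, and let ω_{C,B} be the circle through C and A tangent to line CB at C. Then these three circles have a common point G (a Brocard point of the triangle). -/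
open EuclideanGeometry

/-!
The common point is the Brocard point, with barycentric coordinates `(a²b² : b²c² : c²a²)`
where `a = BC`, `b = CA`, `c = AB`. If `P` lies on a circle with centre `O`, then a point `X`
lies on it iff `‖X - P‖² = 2⟪X - P, O - P⟫`. For the circle through `P` and `R` tangent to `PQ`
at `P` this right-hand side is known on `Q - P` (where it vanishes) and on `R - P`, hence on
the Brocard point, which lies in their span after translating by `P`. The barycentric formula is
invariant under cyclic relabelling, so one computation serves all three circles.
-/

open scoped RealInnerProductSpace

namespace EuclideanGeometry.Sphere

variable {V : Type*} [NormedAddCommGroup V] [InnerProductSpace ℝ V]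

lemma mem_iff_norm_sub_sq_eq_two_inner {s : Sphere V} {P X : V} (hP : P ∈ s) :
    X ∈ s ↔ ‖X - P‖ ^ 2 = 2 * ⟪X - P, s.center - P⟫ := by
  rw [mem_sphere] at hP
  rw [mem_sphere, ← hP, dist_eq_norm, dist_eq_norm,
    show X - s.center = (X - P) - (s.center - P) by abel,
    ← sq_eq_sq₀ (norm_nonneg _) (norm_nonneg _), norm_sub_sq_real, norm_sub_rev P s.center]
  constructor <;> intro h <;> linarith

lemma inner_center_sub_eq_zero_of_forall_mem_line_eq {s : Sphere V} {P Q : V} (hP : P ∈ s)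
    (h : ∀ X ∈ s, X ∈ line[ℝ, P, Q] → X = P) : ⟪s.center - P, Q - P⟫ = 0 := by
  have hX : s.secondInter P (Q - P) = P :=
    h _ ((secondInter_mem _).2 hP) (secondInter_vsub_mem_affineSpan s P Q)
  rw [secondInter_eq_self_iff, vsub_eq_sub, real_inner_comm, ← neg_sub, inner_neg_left,
    neg_eq_zero] at hX
  exact hX

end EuclideanGeometry.Sphere

section Brocard

variable {V : Type*} [NormedAddCommGroup V] [InnerProductSpace ℝ V]

noncomputable def brocardPoint (A B C : V) : V :=
  (‖B - C‖ ^ 2 * ‖C - A‖ ^ 2 + ‖C - A‖ ^ 2 * ‖A - B‖ ^ 2 + ‖A - B‖ ^ 2 * ‖B - C‖ ^ 2)⁻¹ •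
    ((‖B - C‖ ^ 2 * ‖C - A‖ ^ 2) • A + (‖C - A‖ ^ 2 * ‖A - B‖ ^ 2) • B +
      (‖A - B‖ ^ 2 * ‖B - C‖ ^ 2) • C)

lemma brocardPoint_rotate (A B C : V) : brocardPoint B C A = brocardPoint A B C := by
  rw [brocardPoint, brocardPoint]
  congr 1
  · ring
  · abel

lemma brocardPoint_mem_sphere {s : Sphere V} {P Q R : V} (hPQ : P ≠ Q) (hPR : P ≠ R)
    (hP : P ∈ s) (hR : R ∈ s) (htan : ⟪s.center - P, Q - P⟫ = 0) :
    brocardPoint P R Q ∈ s := by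
  set p := ‖R - Q‖ ^ 2 with hp_def
  set q := ‖Q - P‖ ^ 2 with hq_def
  set r := ‖P - R‖ ^ 2 with hr_def
  have hq : 0 < q := by have := sub_ne_zero.2 hPQ.symm; positivity
  have hr : 0 < r := by have := sub_ne_zero.2 hPR; positivity
  have hD : p * q + q * r + r * p ≠ 0 := by positivity
  have hG : brocardPoint P R Q - P =
      (p * q + q * r + r * p)⁻¹ • ((q * r) • (R - P) + (r * p) • (Q - P)) := by
    rw [eq_inv_smul_iff₀ hD, brocardPoint, ← hp_def, ← hq_def, ← hr_def, smul_sub,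
      smul_inv_smul₀ hD]
    module
  have hRP : ‖R - P‖ ^ 2 = r := by rw [hr_def, norm_sub_rev]
  have hp : p = r - 2 * ⟪R - P, Q - P⟫ + q := by
    rw [hp_def, show R - Q = (R - P) - (Q - P) by abel, norm_sub_sq_real, hRP]
  have hX : ‖(q * r) • (R - P) + (r * p) • (Q - P)‖ ^ 2 =
      (p * q + q * r + r * p) * q * r ^ 2 := by
    rw [norm_add_sq_real, norm_smul, norm_smul, real_inner_smul_left, real_inner_smul_right,
      mul_pow, mul_pow, hRP, Real.norm_eq_abs, Real.norm_eq_abs, sq_abs, sq_abs]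
    linear_combination (q * r ^ 2 * p) * hp
  have hXw : 2 * ⟪(q * r) • (R - P) + (r * p) • (Q - P), s.center - P⟫ = q * r * r := by
    rw [inner_add_left, real_inner_smul_left, real_inner_smul_left,
      real_inner_comm (s.center - P) (Q - P), htan, ← hRP,
      (Sphere.mem_iff_norm_sub_sq_eq_two_inner hP).1 hR]
    ring
  rw [Sphere.mem_iff_norm_sub_sq_eq_two_inner hP, hG, norm_smul, real_inner_smul_left, mul_pow,
    hX, Real.norm_eq_abs, sq_abs, mul_left_comm 2, hXw]
  linear_combination ((p * q + q * r + r * p)⁻¹ * q * r ^ 2) * inv_mul_cancel₀ hD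

lemma brocardPoint_mem_of_isTangentAt {s : Sphere (EuclideanSpace ℝ (Fin 2))}
    {P Q R : EuclideanSpace ℝ (Fin 2)} (hPQ : P ≠ Q) (hPR : P ≠ R) (hR : R ∈ s)
    (ht : IsTangentAt s line[ℝ, P, Q] P) : brocardPoint P R Q ∈ s :=
  brocardPoint_mem_sphere hPQ hPR ht.1 hR
    (Sphere.inner_center_sub_eq_zero_of_forall_mem_line_eq ht.1 ht.2.2)

end Brocard

/-- **Brocard point.** The circle `ω_{A,C}` through `A` and `B` tangent to line `AC`
at `A`, the circle `ω_{B,A}` through `B` and `C` tangent to line `BA` at `B`, and the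
circle `ω_{C,B}` through `C` and `A` tangent to line `CB` at `C` have a common
point. -/
theorem brocard_point_exists
    (A B C : EuclideanSpace ℝ (Fin 2))
    (hABC : AffineIndependent ℝ ![A, B, C])
    (ωAC ωBA ωCB : Sphere (EuclideanSpace ℝ (Fin 2)))
    (hωAC : B ∈ ωAC ∧ IsTangentAt ωAC (line[ℝ, A, C]) A)
    (hωBA : C ∈ ωBA ∧ IsTangentAt ωBA (line[ℝ, B, A]) B)
    (hωCB : A ∈ ωCB ∧ IsTangentAt ωCB (line[ℝ, C, B]) C) :
    ∃ G : EuclideanSpace ℝ (Fin 2), G ∈ ωAC ∧ G ∈ ωBA ∧ G ∈ ωCB := by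
  have hAB : A ≠ B := by simpa using hABC.injective.ne (show (0 : Fin 3) ≠ 1 by decide)
  have hAC : A ≠ C := by simpa using hABC.injective.ne (show (0 : Fin 3) ≠ 2 by decide)
  have hBC : B ≠ C := by simpa using hABC.injective.ne (show (1 : Fin 3) ≠ 2 by decide)
  refine ⟨brocardPoint A B C, ?_, ?_, ?_⟩
  · exact brocardPoint_mem_of_isTangentAt hAC hAB hωAC.1 hωAC.2
  · rw [← brocardPoint_rotate A B C]
    exact brocardPoint_mem_of_isTangentAt hAB.symm hBC hωBA.1 hωBA.2
  · rw [brocardPoint_rotate C A B]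
    exact brocardPoint_mem_of_isTangentAt hBC.symm hAC.symm hωCB.1 hωCB.2
end

section
/- Let ABC be a triangle with circumcenter O. Let I_A be the main Miquel–Steiner centre of ABC from A, I_B the main Miquel–Steiner centre from B, and I_C the main Miquel–Steiner centre from C. Then the four points I_A, I_B, I_C, O are concyclic (they lie on the Brocard circle, and I_A, I_B, I_C are the vertices of Brocard's second triangle). -/
/-!
Invert about a vertex `A` with radius `1`, writing `X*` for the image of `X`. The circle through
`A` and `C` tangent to `AB` at `A` becomes the line through `C*` parallel to `AB`, and the other
circle the line through `B*` parallel to `AC`, so `I_A*` completes the parallelogram on `A`, `B*`,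
`C*`. Its diagonal `v = (B* - A) + (C* - A)` satisfies `⟪v, O - A⟫ = 1` and is parallel to
`K - A`, where `K` is the symmedian point, while `I_A - A = v / ‖v‖²`. Hence
`⟪K - I_A, O - I_A⟫ = 0`: `I_A` lies on the circle with diameter `KO`, and so do `I_B` and `I_C`.
-/

open EuclideanGeometry

open scoped RealInnerProductSpace

section

variable {V : Type*} [NormedAddCommGroup V] [InnerProductSpace ℝ V]

theorem two_inner_sub_eq_norm_sub_sq_of_dist_eq {x p o : V} (h : dist x o = dist p o) :
    2 * ⟪x - p, o - p⟫ = ‖x - p‖ ^ 2 := by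
  have hsq : ‖(x - p) - (o - p)‖ ^ 2 = ‖o - p‖ ^ 2 := by
    rw [sub_sub_sub_cancel_right, ← dist_eq_norm, h, dist_eq_norm, norm_sub_rev]
  rw [norm_sub_sq_real] at hsq
  linarith

theorem inner_sub_center_sub_eq_zero_of_tangent {s : Sphere V} {p q : V} (hp : p ∈ s)
    (ht : ∀ x ∈ s, x ∈ line[ℝ, p, q] → x = p) : ⟪q - p, s.center - p⟫ = 0 := by
  rw [← neg_sub p s.center, inner_neg_right, neg_eq_zero]
  exact Sphere.secondInter_eq_self_iff.mp
    (ht _ ((Sphere.secondInter_mem _).mpr hp) (s.secondInter_vsub_mem_affineSpan p q))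

theorem inversion_one_sub (a x : V) :
    inversion a 1 x - a = (‖x - a‖ ^ 2)⁻¹ • (x - a) := by
  rw [← vsub_eq_sub, inversion_vsub_center, dist_eq_norm_vsub, vsub_eq_sub, one_div, inv_pow]

theorem two_inner_inversion_sub_eq_one {a x e : V} (hx : x ≠ a)
    (h : 2 * ⟪x - a, e⟫ = ‖x - a‖ ^ 2) : 2 * ⟪inversion a 1 x - a, e⟫ = 1 := by
  have : ‖x - a‖ ≠ 0 := norm_ne_zero_iff.mpr (sub_ne_zero.mpr hx)
  rw [inversion_one_sub, real_inner_smul_left, mul_left_comm, h, inv_mul_cancel₀ (by positivity)]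

theorem AffineIndependent.linearIndependent_sub {a b c : V}
    (h : AffineIndependent ℝ ![a, b, c]) : LinearIndependent ℝ ![b - a, c - a] := by
  rw [affineIndependent_iff_linearIndependent_vsub ℝ _ (0 : Fin 3),
    ← linearIndependent_equiv (finSuccAboveEquiv (0 : Fin 3))] at h
  convert! h
  ext i
  fin_cases i <;> rfl

theorem exists_inversion_sub_inversion_eq_smul_of_tangent [Fact (Module.finrank ℝ V = 2)]
    {a b c p : V} {ω : Sphere V} (hba : b ≠ a) (hca : c ≠ a) (hpa : p ≠ a)
    (ha : a ∈ ω) (hc : c ∈ ω) (hp : p ∈ ω) (ht : ∀ x ∈ ω, x ∈ line[ℝ, a, b] → x = a) :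
    ∃ s : ℝ, inversion a 1 p - inversion a 1 c = s • (b - a) := by
  have hcirc {x : V} (hx : x ∈ ω) (hxa : x ≠ a) : 2 * ⟪inversion a 1 x - a, ω.center - a⟫ = 1 :=
    two_inner_inversion_sub_eq_one hxa <| two_inner_sub_eq_norm_sub_sq_of_dist_eq <|
      (mem_sphere.mp hx).trans (mem_sphere.mp ha).symm
  have hc' := hcirc hc hca
  have hp' := hcirc hp hpa
  have he : ω.center - a ≠ 0 := by
    rintro he
    rw [he, inner_zero_right] at hc'
    norm_num at hc'
  have hb : ⟪ω.center - a, b - a⟫ = 0 := by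
    rw [real_inner_comm, inner_sub_center_sub_eq_zero_of_tangent ha ht]
  have hpc : ⟪ω.center - a, inversion a 1 p - inversion a 1 c⟫ = 0 := by
    rw [← sub_sub_sub_cancel_right (inversion a 1 p) _ a, inner_sub_right,
      real_inner_comm _ (ω.center - a), real_inner_comm _ (ω.center - a)]
    linarith
  obtain ⟨s, hs⟩ := Submodule.mem_span_singleton.mp
    (Submodule.mem_span_singleton_of_inner_eq_zero_of_inner_eq_zero he (sub_ne_zero.mpr hba) hpc hb)
  exact ⟨s, hs.symm⟩

theorem inversion_sub_eq_add_of_tangent [Fact (Module.finrank ℝ V = 2)]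
    {a b c p : V} {ω₁ ω₂ : Sphere V} (hind : LinearIndependent ℝ ![b - a, c - a]) (hpa : p ≠ a)
    (ha₁ : a ∈ ω₁) (hc₁ : c ∈ ω₁) (hp₁ : p ∈ ω₁) (ht₁ : ∀ x ∈ ω₁, x ∈ line[ℝ, a, b] → x = a)
    (ha₂ : a ∈ ω₂) (hb₂ : b ∈ ω₂) (hp₂ : p ∈ ω₂) (ht₂ : ∀ x ∈ ω₂, x ∈ line[ℝ, a, c] → x = a) :
    inversion a 1 p - a = (inversion a 1 b - a) + (inversion a 1 c - a) := by
  have hba : b ≠ a := sub_ne_zero.mp (hind.ne_zero 0)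
  have hca : c ≠ a := sub_ne_zero.mp (hind.ne_zero 1)
  obtain ⟨s, hs⟩ := exists_inversion_sub_inversion_eq_smul_of_tangent hba hca hpa ha₁ hc₁ hp₁ ht₁
  obtain ⟨t, ht⟩ := exists_inversion_sub_inversion_eq_smul_of_tangent hca hba hpa ha₂ hb₂ hp₂ ht₂
  have hb' := inversion_one_sub a b
  have hc' := inversion_one_sub a c
  obtain ⟨hs', -⟩ := LinearIndependent.pair_iff.mp hind (s - (‖b - a‖ ^ 2)⁻¹) ((‖c - a‖ ^ 2)⁻¹ - t)
    (by rw [sub_smul, sub_smul, ← hs, ← ht, ← hb', ← hc']; abel)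
  rw [← sub_add_sub_cancel _ (inversion a 1 c), hs, sub_eq_zero.mp hs', ← hb']

noncomputable def symmedianPoint (a b c : V) : V :=
  (dist b c ^ 2 + dist c a ^ 2 + dist a b ^ 2)⁻¹ •
    (dist b c ^ 2 • a + dist c a ^ 2 • b + dist a b ^ 2 • c)

theorem symmedianPoint_swap (a b c : V) : symmedianPoint b a c = symmedianPoint a b c := by
  simp only [symmedianPoint, dist_comm b a, dist_comm a c, dist_comm c b]
  module

theorem symmedianPoint_rotate (a b c : V) : symmedianPoint c a b = symmedianPoint a b c := by
  simp only [symmedianPoint]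
  module

theorem exists_symmedianPoint_sub_eq_smul {a b c : V} (hba : b ≠ a) (hca : c ≠ a) :
    ∃ r : ℝ, symmedianPoint a b c - a = r • ((inversion a 1 b - a) + (inversion a 1 c - a)) := by
  have hβ : ‖b - a‖ ≠ 0 := norm_ne_zero_iff.mpr (sub_ne_zero.mpr hba)
  have hγ : ‖c - a‖ ≠ 0 := norm_ne_zero_iff.mpr (sub_ne_zero.mpr hca)
  have hσ : dist b c ^ 2 + ‖c - a‖ ^ 2 + ‖b - a‖ ^ 2 ≠ 0 := by positivity
  refine ⟨‖b - a‖ ^ 2 * ‖c - a‖ ^ 2 / (dist b c ^ 2 + ‖c - a‖ ^ 2 + ‖b - a‖ ^ 2), ?_⟩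
  rw [inversion_one_sub, inversion_one_sub, symmedianPoint, dist_comm a b, dist_eq_norm b a,
    dist_eq_norm c a]
  match_scalars <;> field_simp
  ring

theorem inner_symmedianPoint_sub_sub_eq_zero {a b c o p : V} (hba : b ≠ a) (hca : c ≠ a)
    (hob : dist o a = dist o b) (hoc : dist o a = dist o c)
    (hp : inversion a 1 p - a = (inversion a 1 b - a) + (inversion a 1 c - a)) :
    ⟪symmedianPoint a b c - p, o - p⟫ = 0 := by
  set v := (inversion a 1 b - a) + (inversion a 1 c - a)
  have hvo : ⟪v, o - a⟫ = 1 := by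
    have hbo : dist b o = dist a o := by rw [dist_comm b, dist_comm a, hob]
    have hco : dist c o = dist a o := by rw [dist_comm c, dist_comm a, hoc]
    have hb := two_inner_inversion_sub_eq_one hba (two_inner_sub_eq_norm_sub_sq_of_dist_eq hbo)
    have hc := two_inner_inversion_sub_eq_one hca (two_inner_sub_eq_norm_sub_sq_of_dist_eq hco)
    rw [inner_add_left]
    linarith
  have hv : ‖v‖ ^ 2 ≠ 0 := by
    rintro hv
    rw [sq_eq_zero_iff, norm_eq_zero] at hv
    rw [hv, inner_zero_left] at hvo
    exact zero_ne_one hvo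
  have hpv : p - a = (‖v‖ ^ 2)⁻¹ • v := by
    rw [← hp, ← inversion_one_sub, inversion_inversion a one_ne_zero]
  obtain ⟨r, hr⟩ := exists_symmedianPoint_sub_eq_smul hba hca
  have hKp : symmedianPoint a b c - p = (r - (‖v‖ ^ 2)⁻¹) • v := by
    rw [← sub_sub_sub_cancel_right _ p a, hpv, hr, sub_smul]
  have hop : o - p = (o - a) - (‖v‖ ^ 2)⁻¹ • v := by
    rw [← hpv]
    abel
  rw [hKp, hop, real_inner_smul_left, inner_sub_right, real_inner_smul_right,
    real_inner_self_eq_norm_sq, hvo, inv_mul_cancel₀ hv, sub_self, mul_zero]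

end

theorem mem_ofDiameter_symmedianPoint_of_isTangentAt {A B C O P : EuclideanSpace ℝ (Fin 2)}
    {ω₁ ω₂ : Sphere (EuclideanSpace ℝ (Fin 2))} (hABC : AffineIndependent ℝ ![A, B, C])
    (hOB : dist O A = dist O B) (hOC : dist O A = dist O C)
    (hω₁ : C ∈ ω₁ ∧ IsTangentAt ω₁ (line[ℝ, A, B]) A)
    (hω₂ : B ∈ ω₂ ∧ IsTangentAt ω₂ (line[ℝ, A, C]) A) (hP : P ≠ A ∧ P ∈ ω₁ ∧ P ∈ ω₂) :
    P ∈ Sphere.ofDiameter (symmedianPoint A B C) O := by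
  have : Fact (Module.finrank ℝ (EuclideanSpace ℝ (Fin 2)) = 2) := ⟨finrank_euclideanSpace_fin⟩
  obtain ⟨hC₁, hA₁, -, ht₁⟩ := hω₁
  obtain ⟨hB₂, hA₂, -, ht₂⟩ := hω₂
  obtain ⟨hPA, hP₁, hP₂⟩ := hP
  have hind := hABC.linearIndependent_sub
  have hright := inner_symmedianPoint_sub_sub_eq_zero (sub_ne_zero.mp (hind.ne_zero 0))
    (sub_ne_zero.mp (hind.ne_zero 1)) hOB hOC
    (inversion_sub_eq_add_of_tangent hind hPA hA₁ hC₁ hP₁ ht₁ hA₂ hB₂ hP₂ ht₂)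
  exact Sphere.angle_eq_pi_div_two_iff_mem_sphere_ofDiameter.mp
    ((InnerProductGeometry.inner_eq_zero_iff_angle_eq_pi_div_two _ _).mp hright)

/-- **Brocard circle and Brocard's second triangle.** The three main Miquel–Steiner
centres `I_A`, `I_B`, `I_C` of triangle `ABC` and the circumcenter `O` are
concyclic. -/
theorem main_centres_circumcenter_concyclic
    (A B C O I_A I_B I_C : EuclideanSpace ℝ (Fin 2))
    (hABC : AffineIndependent ℝ ![A, B, C])
    (hOA : dist O A = dist O B) (hOB : dist O B = dist O C)
    (ωAB ωAC ωBA ωBC ωCA ωCB : Sphere (EuclideanSpace ℝ (Fin 2)))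
    (hωAB : C ∈ ωAB ∧ IsTangentAt ωAB (line[ℝ, A, B]) A)
    (hωAC : B ∈ ωAC ∧ IsTangentAt ωAC (line[ℝ, A, C]) A)
    (hωBA : C ∈ ωBA ∧ IsTangentAt ωBA (line[ℝ, B, A]) B)
    (hωBC : A ∈ ωBC ∧ IsTangentAt ωBC (line[ℝ, B, C]) B)
    (hωCA : B ∈ ωCA ∧ IsTangentAt ωCA (line[ℝ, C, A]) C)
    (hωCB : A ∈ ωCB ∧ IsTangentAt ωCB (line[ℝ, C, B]) C)
    (hIA : I_A ≠ A ∧ I_A ∈ ωAB ∧ I_A ∈ ωAC)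
    (hIB : I_B ≠ B ∧ I_B ∈ ωBA ∧ I_B ∈ ωBC)
    (hIC : I_C ≠ C ∧ I_C ∈ ωCA ∧ I_C ∈ ωCB) :
    Cospherical ({I_A, I_B, I_C, O} : Set (EuclideanSpace ℝ (Fin 2))) := by
  have hBAC : AffineIndependent ℝ ![B, A, C] := by
    rw [affineIndependent_iff_not_collinear_set] at hABC ⊢
    rwa [Set.insert_comm]
  have hCAB : AffineIndependent ℝ ![C, A, B] := by
    rw [affineIndependent_iff_not_collinear_set] at hABC ⊢
    rwa [Set.insert_comm, Set.pair_comm]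
  have hIA' := mem_ofDiameter_symmedianPoint_of_isTangentAt hABC hOA (hOA.trans hOB) hωAB hωAC hIA
  have hIB' := mem_ofDiameter_symmedianPoint_of_isTangentAt hBAC hOA.symm hOB hωBA hωBC hIB
  have hIC' := mem_ofDiameter_symmedianPoint_of_isTangentAt hCAB (hOA.trans hOB).symm hOB.symm
    hωCA hωCB hIC
  rw [symmedianPoint_swap] at hIB'
  rw [symmedianPoint_rotate] at hIC'
  refine (Sphere.ofDiameter (symmedianPoint A B C) O).cospherical.subset ?_
  rintro _ (rfl | rfl | rfl | rfl)
  exacts [hIA', hIB', hIC', (Sphere.isDiameter_ofDiameter _ _).right_mem]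
end

section
/- Let ABC be a triangle such that B and C are not antipodal on the circumcircle of ABC, let M_t be the intersection point of the tangent lines to the circumcircle at B and at C, and let I_A be the main Miquel–Steiner centre of ABC from A. Then I_A lies on the line through A and M_t; that is, the Miquel–Steiner axis A I_A is the symmedian of ABC from A. -/
open EuclideanGeometry

/-!
Put `u = B - A`, `v = C - A` and `ω` for the area form. Both `M_t - A` and `I_A - A` are
parallel to `‖v‖² u + ‖u‖² v`, which points along the symmedian.

For `I_A`: on a circle through `A` tangent at `A` to the direction `u`, the ratio
`ω(u, X - A) / ‖X - A‖²` is constant (tangent–chord angle). The two auxiliary circles therefore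
give `‖v‖² ω(u, w) = ‖w‖² ω(u, v)` and `‖u‖² ω(v, w) = ‖w‖² ω(v, u)` for `w = I_A - A`, and adding
them yields `ω(‖v‖² u + ‖u‖² v, w) = 0`.

For `M_t`: with `O` the circumcentre, `M_t` is cut out by the two linear equations
`⟪M_t - B, B - O⟫ = 0 = ⟪M_t - C, C - O⟫`, which are independent because tangents at antipodal
points do not meet; and `2⟪u, v⟫ (M_t - A) = ‖v‖² u + ‖u‖² v` holds when tested against `B - O`
and `C - O`.
-/

open Module RealInnerProductSpace

namespace Orientation

variable {E : Type*} [NormedAddCommGroup E] [InnerProductSpace ℝ E] [Fact (finrank ℝ E = 2)]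
  (o : Orientation ℝ E (Fin 2))

local notation "ω" => o.areaForm

theorem exists_eq_smul_of_areaForm_eq_zero {x y : E} (hx : x ≠ 0) (h : ω x y = 0) :
    ∃ t : ℝ, y = t • x := by
  have hx' : ‖x‖ ^ 2 ≠ 0 := by positivity
  refine ⟨⟪x, y⟫ / ‖x‖ ^ 2, ext_inner_left ℝ fun z => ?_⟩
  have key := o.inner_mul_inner_add_areaForm_mul_areaForm x y z
  rw [h, zero_mul, add_zero, ← real_inner_comm x z, ← real_inner_comm y z] at key
  rw [real_inner_smul_right, div_mul_eq_mul_div, eq_div_iff hx']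
  linear_combination -key

theorem eq_zero_of_inner_eq_zero_of_areaForm_ne_zero {x y z : E} (h : ω x y ≠ 0)
    (hx : ⟪z, x⟫ = 0) (hy : ⟪z, y⟫ = 0) : z = 0 := by
  have key := o.inner_mul_areaForm_sub z x y
  rw [hx, hy] at key
  simpa [h] using key.symm

theorem areaForm_ne_zero_of_norm_eq {x y : E} (hxy : ‖x‖ = ‖y‖) (h₁ : x ≠ y) (h₂ : x ≠ -y) :
    ω x y ≠ 0 := by
  intro h
  have key := o.inner_sq_add_areaForm_sq x y
  rw [h, ← hxy] at key
  have hprod : ‖x - y‖ ^ 2 * ‖x + y‖ ^ 2 = 0 := by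
    rw [norm_sub_sq_real, norm_add_sq_real, ← hxy]
    linear_combination -4 * key
  rcases mul_eq_zero.1 hprod with h' | h'
  · exact h₁ (sub_eq_zero.1 (by simpa using h'))
  · exact h₂ (eq_neg_of_add_eq_zero_left (by simpa using h'))

end Orientation

namespace EuclideanGeometry

variable {V P : Type*} [NormedAddCommGroup V] [InnerProductSpace ℝ V] [MetricSpace P]
  [NormedAddTorsor V P]

theorem Sphere.isTangentAt_of_forall_mem_eq {s : Sphere P} {p : P} {L : AffineSubspace ℝ P}
    (hp : p ∈ s) (hpL : p ∈ L) (h : ∀ x ∈ s, x ∈ L → x = p) : s.IsTangentAt p L := by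
  refine ⟨hp, hpL, fun x hx => ?_⟩
  rw [Sphere.mem_orthRadius_iff_inner_left]
  have hmem : s.secondInter p (x -ᵥ p) ∈ L := AffineSubspace.vadd_mem_of_mem_direction
    (Submodule.smul_mem _ _ (AffineSubspace.vsub_mem_direction hx hpL)) hpL
  exact Sphere.secondInter_eq_self_iff.1 (h _ ((Sphere.secondInter_mem _).2 hp) hmem)

theorem Sphere.norm_vsub_sq_eq_two_mul_inner {s : Sphere P} {a x : P} (ha : a ∈ s) (hx : x ∈ s) :
    ‖x -ᵥ a‖ ^ 2 = 2 * ⟪x -ᵥ a, s.center -ᵥ a⟫ := by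
  have h : ‖(x -ᵥ a) - (s.center -ᵥ a)‖ = ‖s.center -ᵥ a‖ := by
    rw [vsub_sub_vsub_cancel_right, ← dist_eq_norm_vsub, ← dist_eq_norm_vsub, dist_comm s.center,
      mem_sphere.1 hx, mem_sphere.1 ha]
  have := congrArg (· ^ 2) h
  simp only [norm_sub_sq_real] at this
  linarith

theorem Sphere.IsTangentAt.vsub_center_ne_neg {s : Sphere P} {b c m : P}
    {L₁ L₂ : AffineSubspace ℝ P} (hb : s.IsTangentAt b L₁) (hc : s.IsTangentAt c L₂)
    (hm₁ : m ∈ L₁) (hm₂ : m ∈ L₂) (hbc : b ≠ c) : b -ᵥ s.center ≠ -(c -ᵥ s.center) := by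
  intro h
  have e₁ := hb.inner_left_eq_zero_of_mem hm₁
  have e₂ := hc.inner_left_eq_zero_of_mem hm₂
  rw [← vsub_sub_vsub_cancel_right m b s.center, h] at e₁
  rw [← vsub_sub_vsub_cancel_right m c s.center] at e₂
  have hc0 : c -ᵥ s.center = 0 := by
    rw [← inner_self_eq_zero (𝕜 := ℝ)]
    simp only [inner_sub_left, inner_neg_left, inner_neg_right] at e₁ e₂
    linarith
  exact hbc (vsub_left_cancel (by rw [h, hc0, neg_zero]))

/-- With the origin at the circumcentre, `n` on the tangent at `x`. -/
theorem inner_tangent_symmedian_sub_eq_zero {p x y n : V} (hx : ‖x‖ = ‖p‖) (hy : ‖y‖ = ‖p‖)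
    (hn : ⟪n - x, x⟫ = 0) :
    ⟪(2 * ⟪x - p, y - p⟫) • (n - p) - (‖y - p‖ ^ 2 • (x - p) + ‖x - p‖ ^ 2 • (y - p)), x⟫ = 0 := by
  simp only [inner_sub_left, inner_add_left, real_inner_smul_left, inner_sub_right,
    norm_sub_sq_real, real_inner_self_eq_norm_sq] at hn ⊢
  rw [real_inner_comm p y, real_inner_comm p x, real_inner_comm x y, hx, hy]
  rw [hx] at hn
  linear_combination 2 * (⟪x, y⟫ - ⟪p, y⟫ - (⟪p, x⟫ - ‖p‖ ^ 2)) * hn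

def symmedianVector (a b c : P) : V := ‖c -ᵥ a‖ ^ 2 • (b -ᵥ a) + ‖b -ᵥ a‖ ^ 2 • (c -ᵥ a)

theorem symmedianVector_ne_zero {a b c : P} (h : AffineIndependent ℝ ![a, b, c]) :
    symmedianVector a b c ≠ 0 := by
  intro h0
  have hu0 : ‖b -ᵥ a‖ ^ 2 ≠ 0 := by
    have : b -ᵥ a ≠ 0 := vsub_ne_zero.2 (h.injective.ne (by decide : (1 : Fin 3) ≠ 0))
    positivity
  have hv : c -ᵥ a = (-(‖c -ᵥ a‖ ^ 2 / ‖b -ᵥ a‖ ^ 2)) • (b -ᵥ a) := by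
    apply smul_right_injective V hu0
    dsimp only
    rw [smul_smul, mul_neg, mul_div_cancel₀ _ hu0, neg_smul, eq_neg_iff_add_eq_zero, add_comm]
    exact h0
  have hc : c ∈ line[ℝ, a, b] := by
    rw [← vsub_vadd c a, hv]
    exact smul_vsub_vadd_mem_affineSpan_pair _ _ _
  apply affineIndependent_iff_not_collinear_set.1 h
  convert collinear_insert_of_mem_affineSpan_pair hc using 1
  ext
  simp only [Set.mem_insert_iff, Set.mem_singleton_iff]
  tauto

variable [Fact (finrank ℝ V = 2)]

theorem Sphere.two_inner_smul_vsub_eq_symmedianVector {s : Sphere P} {a b c m : P}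
    {L₁ L₂ : AffineSubspace ℝ P} (ha : a ∈ s) (hbc : b ≠ c)
    (hb : s.IsTangentAt b L₁) (hc : s.IsTangentAt c L₂) (hm₁ : m ∈ L₁) (hm₂ : m ∈ L₂) :
    (2 * ⟪b -ᵥ a, c -ᵥ a⟫) • (m -ᵥ a) = symmedianVector a b c := by
  have : FiniteDimensional ℝ V := .of_fact_finrank_eq_two
  let o : Orientation ℝ V (Fin 2) := (finBasisOfFinrankEq ℝ V Fact.out).orientation
  have hnorm : ∀ {x}, x ∈ s → ‖x -ᵥ s.center‖ = ‖a -ᵥ s.center‖ := fun hx => by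
    rw [← dist_eq_norm_vsub, ← dist_eq_norm_vsub, mem_sphere.1 hx, mem_sphere.1 ha]
  have hωbc : o.areaForm (b -ᵥ s.center) (c -ᵥ s.center) ≠ 0 :=
    o.areaForm_ne_zero_of_norm_eq ((hnorm hb.mem_sphere).trans (hnorm hc.mem_sphere).symm)
      (fun h => hbc (vsub_left_cancel h)) (hb.vsub_center_ne_neg hc hm₁ hm₂ hbc)
  rw [← sub_eq_zero]
  refine o.eq_zero_of_inner_eq_zero_of_areaForm_ne_zero hωbc ?_ ?_ <;>
    simp only [symmedianVector, ← vsub_sub_vsub_cancel_right _ a s.center]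
  · exact inner_tangent_symmedian_sub_eq_zero (hnorm hb.mem_sphere) (hnorm hc.mem_sphere)
      (by rw [vsub_sub_vsub_cancel_right]; exact hb.inner_left_eq_zero_of_mem hm₁)
  · rw [add_comm, real_inner_comm _ (b -ᵥ s.center - (a -ᵥ s.center))]
    exact inner_tangent_symmedian_sub_eq_zero (hnorm hc.mem_sphere) (hnorm hb.mem_sphere)
      (by rw [vsub_sub_vsub_cancel_right]; exact hc.inner_left_eq_zero_of_mem hm₂)

variable (o : Orientation ℝ V (Fin 2))

theorem Sphere.IsTangentAt.norm_vsub_sq_mul_areaForm_eq {s : Sphere P} {a b x y : P}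
    {L : AffineSubspace ℝ P} (h : s.IsTangentAt a L) (hb : b ∈ L) (hab : b ≠ a) (hx : x ∈ s)
    (hy : y ∈ s) :
    ‖x -ᵥ a‖ ^ 2 * o.areaForm (b -ᵥ a) (y -ᵥ a) = ‖y -ᵥ a‖ ^ 2 * o.areaForm (b -ᵥ a) (x -ᵥ a) := by
  set u := b -ᵥ a
  have hu : ⟪u, s.center -ᵥ a⟫ = 0 := by
    rw [← neg_vsub_eq_vsub_rev, inner_neg_right, h.inner_left_eq_zero_of_mem hb, neg_zero]
  have key : ∀ z ∈ s,
      ‖u‖ ^ 2 * ‖z -ᵥ a‖ ^ 2 = 2 * (o.areaForm u (s.center -ᵥ a) * o.areaForm u (z -ᵥ a)) := by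
    intro z hz
    have := o.inner_mul_inner_add_areaForm_mul_areaForm u (s.center -ᵥ a) (z -ᵥ a)
    rw [hu, zero_mul, zero_add] at this
    rw [Sphere.norm_vsub_sq_eq_two_mul_inner h.mem_sphere hz, this, real_inner_comm]
    ring
  have hu0 : ‖u‖ ^ 2 ≠ 0 := by
    have : u ≠ 0 := vsub_ne_zero.2 hab
    positivity
  apply mul_left_cancel₀ hu0
  linear_combination o.areaForm u (y -ᵥ a) * key x hx - o.areaForm u (x -ᵥ a) * key y hy

theorem areaForm_symmedianVector_eq_zero {a b c i : P} {s₁ s₂ : Sphere P} (hab : b ≠ a)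
    (hac : c ≠ a) (h₁ : s₁.IsTangentAt a line[ℝ, a, b]) (hc : c ∈ s₁) (hi₁ : i ∈ s₁)
    (h₂ : s₂.IsTangentAt a line[ℝ, a, c]) (hb : b ∈ s₂) (hi₂ : i ∈ s₂) :
    o.areaForm (symmedianVector a b c) (i -ᵥ a) = 0 := by
  have e₁ := h₁.norm_vsub_sq_mul_areaForm_eq o (right_mem_affineSpan_pair ℝ a b) hab hc hi₁
  have e₂ := h₂.norm_vsub_sq_mul_areaForm_eq o (right_mem_affineSpan_pair ℝ a c) hac hb hi₂
  simp only [symmedianVector, map_add, map_smul, LinearMap.add_apply, LinearMap.smul_apply,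
    smul_eq_mul]
  linear_combination e₁ + e₂ + ‖i -ᵥ a‖ ^ 2 * o.areaForm_swap (b -ᵥ a) (c -ᵥ a)

theorem mem_affineSpan_pair_of_areaForm_vsub_eq_zero {a m x : P} (hm : m ≠ a)
    (h : o.areaForm (m -ᵥ a) (x -ᵥ a) = 0) : x ∈ line[ℝ, a, m] := by
  obtain ⟨t, ht⟩ := o.exists_eq_smul_of_areaForm_eq_zero (vsub_ne_zero.2 hm) h
  rw [← vsub_vadd x a, ht]
  exact smul_vsub_vadd_mem_affineSpan_pair t a m

end EuclideanGeometry

theorem IsTangentAt.sphere_isTangentAt {s : Sphere (EuclideanSpace ℝ (Fin 2))}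
    {L : AffineSubspace ℝ (EuclideanSpace ℝ (Fin 2))} {p : EuclideanSpace ℝ (Fin 2)}
    (h : IsTangentAt s L p) : s.IsTangentAt p L :=
  Sphere.isTangentAt_of_forall_mem_eq h.1 h.2.1 h.2.2

theorem miquel_axis_is_symmedian_general
    (A B C M_t I_A : EuclideanSpace ℝ (Fin 2))
    (hABC : AffineIndependent ℝ ![A, B, C])
    (S : Sphere (EuclideanSpace ℝ (Fin 2)))
    (hS : A ∈ S ∧ B ∈ S ∧ C ∈ S)
    (lB lC : AffineSubspace ℝ (EuclideanSpace ℝ (Fin 2)))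
    (hlB : (∃ p q : EuclideanSpace ℝ (Fin 2), p ≠ q ∧ lB = line[ℝ, p, q]) ∧
      IsTangentAt S lB B)
    (hlC : (∃ p q : EuclideanSpace ℝ (Fin 2), p ≠ q ∧ lC = line[ℝ, p, q]) ∧
      IsTangentAt S lC C)
    (hMt : M_t ∈ lB ∧ M_t ∈ lC)
    (ωAB ωAC : Sphere (EuclideanSpace ℝ (Fin 2)))
    (hωAB : C ∈ ωAB ∧ IsTangentAt ωAB (line[ℝ, A, B]) A)
    (hωAC : B ∈ ωAC ∧ IsTangentAt ωAC (line[ℝ, A, C]) A)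
    (hIA : I_A ≠ A ∧ I_A ∈ ωAB ∧ I_A ∈ ωAC) :
    I_A ∈ line[ℝ, A, M_t] := by
  have : Fact (finrank ℝ (EuclideanSpace ℝ (Fin 2)) = 2) := ⟨finrank_euclideanSpace_fin⟩
  let o : Orientation ℝ (EuclideanSpace ℝ (Fin 2)) (Fin 2) :=
    (EuclideanSpace.basisFun (Fin 2) ℝ).toBasis.orientation
  have hBA : B ≠ A := hABC.injective.ne (by decide : (1 : Fin 3) ≠ 0)
  have hCA : C ≠ A := hABC.injective.ne (by decide : (2 : Fin 3) ≠ 0)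
  have hBC : B ≠ C := hABC.injective.ne (by decide : (1 : Fin 3) ≠ 2)
  have hM := Sphere.two_inner_smul_vsub_eq_symmedianVector hS.1 hBC hlB.2.sphere_isTangentAt
    hlC.2.sphere_isTangentAt hMt.1 hMt.2
  have hI := areaForm_symmedianVector_eq_zero o hBA hCA hωAB.2.sphere_isTangentAt hωAB.1
    hIA.2.1 hωAC.2.sphere_isTangentAt hωAC.1 hIA.2.2
  have hsv := symmedianVector_ne_zero hABC
  rw [← hM] at hI hsv
  obtain ⟨hk, hMA⟩ := smul_ne_zero_iff.1 hsv
  rw [map_smul, LinearMap.smul_apply, smul_eq_mul, mul_eq_zero] at hI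
  exact mem_affineSpan_pair_of_areaForm_vsub_eq_zero o (vsub_ne_zero.1 hMA) (hI.resolve_left hk)

/-- **The Miquel–Steiner axis is the symmedian.** If `B` and `C` are not antipodal on
the circumcircle `S` of `ABC`, `M_t` is the intersection point of the tangent lines
to `S` at `B` and at `C`, and `I_A` is the main Miquel–Steiner centre of `ABC` from
`A`, then `I_A` lies on the line through `A` and `M_t`. -/
theorem miquel_axis_is_symmedian
    (A B C M_t I_A : EuclideanSpace ℝ (Fin 2))
    (hABC : AffineIndependent ℝ ![A, B, C])
    (S : Sphere (EuclideanSpace ℝ (Fin 2)))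
    (hS : A ∈ S ∧ B ∈ S ∧ C ∈ S)
    (hant : midpoint ℝ B C ≠ S.center)
    (lB lC : AffineSubspace ℝ (EuclideanSpace ℝ (Fin 2)))
    (hlB : (∃ p q : EuclideanSpace ℝ (Fin 2), p ≠ q ∧ lB = line[ℝ, p, q]) ∧
      IsTangentAt S lB B)
    (hlC : (∃ p q : EuclideanSpace ℝ (Fin 2), p ≠ q ∧ lC = line[ℝ, p, q]) ∧
      IsTangentAt S lC C)
    (hMt : M_t ∈ lB ∧ M_t ∈ lC)
    (ωAB ωAC : Sphere (EuclideanSpace ℝ (Fin 2)))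
    (hωAB : C ∈ ωAB ∧ IsTangentAt ωAB (line[ℝ, A, B]) A)
    (hωAC : B ∈ ωAC ∧ IsTangentAt ωAC (line[ℝ, A, C]) A)
    (hIA : I_A ≠ A ∧ I_A ∈ ωAB ∧ I_A ∈ ωAC) :
    I_A ∈ line[ℝ, A, M_t] :=
  miquel_axis_is_symmedian_general A B C M_t I_A hABC S hS lB lC hlB hlC hMt ωAB ωAC hωAB hωAC hIA
end

section
/- Let ABC be a triangle such that B and C are not antipodal on the circumcircle, and let M_t be the intersection point of the tangent lines to the circumcircle at B and at C. Let (B_A, C_A) be a cevian pair from A with cevian intersection point N_A and Miquel–Steiner point M_A, and assume M_A ≠ A and N_A ≠ A. Then M_A lies on the line through A and M_t (the symmedian from A) if and only if N_A lies on the line through A and the midpoint of segment BC (the median from A). -/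
/-!
Write `B_A = A + s (C - A)`, `C_A = A + t (B - A)` and `M_A - A = x (B - A) + y (C - A)`. Both
sides of the equivalence turn out to be equivalent to `s = t`, i.e. to `B_A C_A ∥ BC`.

For the median this is linear algebra on the two cevians. For the symmedian: a circle through `A`
with centre `O` meets the line `A + ℝ e` again at `A + p e` exactly when `2⟪e, O - A⟫ = p ‖e‖²`,
so the two Miquel circles through `A` and `M_A` give
`‖M_A - A‖² = x ‖AB‖² + y s ‖AC‖² = x t ‖AB‖² + y ‖AC‖²`. The tangents at `B` and `C` meet at
`M_t` with `2⟪AB, AC⟫ (M_t - A) = ‖AC‖² (B - A) + ‖AB‖² (C - A)` (the two tangency conditions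
determine `M_t` because `B - O` and `C - O` span the plane when `BC` is not a diameter), so
`M_A ∈ AM_t` iff `x ‖AB‖² = y ‖AC‖²`, which by the circle relation holds iff `s = t`.
-/

open EuclideanGeometry

open RealInnerProductSpace Module AffineMap
open scoped EuclideanSpace

section Module

variable {V : Type*} [AddCommGroup V] [Module ℝ V]

theorem mem_line_iff_exists_sub_eq_smul {A P X : V} :
    X ∈ line[ℝ, A, P] ↔ ∃ r : ℝ, X - A = r • (P - A) := by
  have h := vadd_left_mem_affineSpan_pair (k := ℝ) (p₁ := A) (p₂ := P) (v := X - A)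
  rw [vadd_eq_add, sub_add_cancel] at h
  simpa [eq_comm] using h

theorem LinearIndependent.exists_smul_pair_iff {e₁ e₂ : V} (h : LinearIndependent ℝ ![e₁, e₂])
    {x y p q : ℝ} (hp : p ≠ 0) :
    (∃ r : ℝ, x • e₁ + y • e₂ = r • (p • e₁ + q • e₂)) ↔ x * q = y * p := by
  simp only [smul_add, smul_smul]
  constructor
  · rintro ⟨r, hr⟩
    obtain ⟨rfl, rfl⟩ := h.eq_of_pair hr
    ring
  · intro hxy
    refine ⟨x / p, ?_⟩
    congr 2
    · field_simp
    · field_simp; linarith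

theorem linearIndependent_sub_of_affineIndependent {A B C : V}
    (h : AffineIndependent ℝ ![A, B, C]) : LinearIndependent ℝ ![B - A, C - A] := by
  rw [affineIndependent_iff_linearIndependent_vsub ℝ _ (0 : Fin 3)] at h
  have hcomp : ![B - A, C - A] = (fun i : {x : Fin 3 // x ≠ 0} => ![A, B, C] i -ᵥ ![A, B, C] 0) ∘
      ⇑(finSuccAboveEquiv (0 : Fin 3)) := by
    ext i
    fin_cases i <;> rfl
  rw [hcomp]
  exact h.comp _ (finSuccAboveEquiv 0).injective

theorem mem_line_midpoint_iff {A B C N : V} {s t : ℝ}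
    (h : LinearIndependent ℝ ![B - A, C - A]) (hs : s ≠ 1)
    (hN₁ : N ∈ line[ℝ, B, lineMap A C s]) (hN₂ : N ∈ line[ℝ, C, lineMap A B t]) :
    N ∈ line[ℝ, A, midpoint ℝ B C] ↔ s = t := by
  obtain ⟨u, rfl⟩ := mem_affineSpan_pair_iff_exists_lineMap_eq.1 hN₁
  obtain ⟨v, hv⟩ := mem_affineSpan_pair_iff_exists_lineMap_eq.1 hN₂
  have hNu : lineMap B (lineMap A C s) u - A = (1 - u) • (B - A) + (u * s) • (C - A) := by
    simp only [lineMap_apply_module]; module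
  have hNv : lineMap C (lineMap A B t) v - A = (v * t) • (B - A) + (1 - v) • (C - A) := by
    simp only [lineMap_apply_module]; module
  obtain ⟨h₁, h₂⟩ := h.eq_of_pair (hNu.symm.trans (hv ▸ hNv))
  have hmid : midpoint ℝ B C - A = (1 / 2 : ℝ) • (B - A) + (1 / 2 : ℝ) • (C - A) := by
    rw [midpoint_eq_smul_add, invOf_eq_inv]; module
  rw [mem_line_iff_exists_sub_eq_smul, hNu, hmid, h.exists_smul_pair_iff (by norm_num)]
  constructor
  · intro hu
    have hu0 : u ≠ 0 := by rintro rfl; norm_num at hu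
    apply mul_left_cancel₀ hu0
    linear_combination (2 * t - 2) * hu + h₁ + t * h₂
  · rintro rfl
    have hvu : (1 - s) * (v - u) = 0 := by linear_combination h₁ + h₂
    obtain rfl : v = u := by
      linarith [(mul_eq_zero.1 hvu).resolve_left (sub_ne_zero.2 (Ne.symm hs))]
    linear_combination h₁ / 2

end Module

section InnerProductSpace

variable {V : Type*} [NormedAddCommGroup V] [InnerProductSpace ℝ V]

theorem LinearIndependent.exists_eq_smul_add_smul [Fact (finrank ℝ V = 2)] {e₁ e₂ : V}
    (h : LinearIndependent ℝ ![e₁, e₂]) (v : V) : ∃ x y : ℝ, v = x • e₁ + y • e₂ := by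
  have hspan := h.span_eq_top_of_card_eq_finrank (by simp [Fact.out (p := finrank ℝ V = 2)])
  rw [Matrix.range_cons_cons_empty] at hspan
  obtain ⟨x, y, hv⟩ := Submodule.mem_span_pair.1 (hspan ▸ Submodule.mem_top (x := v))
  exact ⟨x, y, hv.symm⟩

theorem LinearIndependent.eq_zero_of_inner_eq_zero [Fact (finrank ℝ V = 2)] {u v z : V}
    (h : LinearIndependent ℝ ![u, v]) (hu : ⟪u, z⟫ = 0) (hv : ⟪v, z⟫ = 0) : z = 0 := by
  obtain ⟨x, y, hz⟩ := h.exists_eq_smul_add_smul z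
  have hzz : ⟪z, z⟫ = x * ⟪u, z⟫ + y * ⟪v, z⟫ := by
    nth_rw 1 [hz]
    rw [inner_add_left, real_inner_smul_left, real_inner_smul_left]
  rw [hu, hv, mul_zero, mul_zero, add_zero] at hzz
  exact inner_self_eq_zero.1 hzz

theorem norm_sub_sq_eq_two_inner_of_mem_sphere {S : Sphere V} {A X : V} (hA : A ∈ S)
    (hX : X ∈ S) : ‖X - A‖ ^ 2 = 2 * ⟪X - A, S.center - A⟫ := by
  have h : ‖(X - A) - (S.center - A)‖ = ‖S.center - A‖ := by
    rw [sub_sub_sub_cancel_right, ← dist_eq_norm, ← dist_eq_norm', mem_sphere.1 hX,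
      mem_sphere.1 hA]
  rw [← sq_eq_sq₀ (norm_nonneg _) (norm_nonneg _), norm_sub_sq_real] at h
  linarith

theorem two_inner_eq_mul_norm_sq_of_lineMap_mem_sphere {S : Sphere V} {A B : V} {p : ℝ}
    (hp : p ≠ 0) (hA : A ∈ S) (hP : lineMap A B p ∈ S) :
    2 * ⟪B - A, S.center - A⟫ = p * ‖B - A‖ ^ 2 := by
  have h := norm_sub_sq_eq_two_inner_of_mem_sphere hA hP
  have hPA : lineMap A B p - A = p • (B - A) := lineMap_vsub_left A B p
  rw [hPA, norm_smul, real_inner_smul_left, mul_pow, Real.norm_eq_abs, sq_abs] at h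
  apply mul_left_cancel₀ hp
  linear_combination -h

theorem miquel_relation {S₁ S₂ : Sphere V} {A B C M : V} {s t x y : ℝ} (hs : s ≠ 0) (ht : t ≠ 0)
    (hA₁ : A ∈ S₁) (hB₁ : B ∈ S₁) (hP₁ : lineMap A C s ∈ S₁) (hM₁ : M ∈ S₁)
    (hA₂ : A ∈ S₂) (hC₂ : C ∈ S₂) (hQ₂ : lineMap A B t ∈ S₂) (hM₂ : M ∈ S₂)
    (hM : M - A = x • (B - A) + y • (C - A)) :
    x * ‖B - A‖ ^ 2 * (1 - t) = y * ‖C - A‖ ^ 2 * (1 - s) := by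
  have hB := norm_sub_sq_eq_two_inner_of_mem_sphere hA₁ hB₁
  have hC := norm_sub_sq_eq_two_inner_of_mem_sphere hA₂ hC₂
  have hs' := two_inner_eq_mul_norm_sq_of_lineMap_mem_sphere hs hA₁ hP₁
  have ht' := two_inner_eq_mul_norm_sq_of_lineMap_mem_sphere ht hA₂ hQ₂
  have h₁ := norm_sub_sq_eq_two_inner_of_mem_sphere hA₁ hM₁
  have h₂ := norm_sub_sq_eq_two_inner_of_mem_sphere hA₂ hM₂
  rw [hM, inner_add_left, real_inner_smul_left, real_inner_smul_left] at h₁ h₂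
  linear_combination h₂ - h₁ + x * hB + x * ht' - y * hC - y * hs'

theorem inner_symmedian_sub_eq_zero_of_inner_tangent {S : Sphere V} {A B C T : V} (hA : A ∈ S)
    (hB : B ∈ S) (hC : C ∈ S) (hTB : ⟪T - B, B - S.center⟫ = 0) :
    ⟪(2 * ⟪B - A, C - A⟫) • (T - A) - ‖C - A‖ ^ 2 • (B - A) - ‖B - A‖ ^ 2 • (C - A),
      B - S.center⟫ = 0 := by
  have hBA := norm_sub_sq_eq_two_inner_of_mem_sphere hA hB
  have hCA := norm_sub_sq_eq_two_inner_of_mem_sphere hA hC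
  rw [← sub_sub_sub_cancel_right T B A] at hTB
  rw [← sub_sub_sub_cancel_right B S.center A] at hTB ⊢
  generalize B - A = e₁ at *
  generalize C - A = e₂ at *
  generalize T - A = τ at *
  generalize S.center - A = w at *
  simp only [inner_sub_left, inner_sub_right, real_inner_smul_left, real_inner_self_eq_norm_sq]
    at hTB ⊢
  simp only [real_inner_comm] at hTB hBA hCA ⊢
  linear_combination 2 * ⟪e₁, e₂⟫ * hTB + (⟪e₁, e₂⟫ - ‖e₂‖ ^ 2 / 2) * hBA - ‖e₁‖ ^ 2 / 2 * hCA

theorem two_inner_smul_sub_eq_of_inner_tangent [Fact (finrank ℝ V = 2)] {S : Sphere V}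
    {A B C T : V} (hA : A ∈ S) (hB : B ∈ S) (hC : C ∈ S) (hBC : B ≠ C)
    (hO : midpoint ℝ B C ≠ S.center)
    (hTB : ⟪T - B, B - S.center⟫ = 0) (hTC : ⟪T - C, C - S.center⟫ = 0) :
    (2 * ⟪B - A, C - A⟫) • (T - A) = ‖C - A‖ ^ 2 • (B - A) + ‖B - A‖ ^ 2 • (C - A) := by
  rw [← sub_eq_zero, ← sub_sub]
  set z := (2 * ⟪B - A, C - A⟫) • (T - A) - ‖C - A‖ ^ 2 • (B - A) - ‖B - A‖ ^ 2 • (C - A)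
  have hzB : ⟪z, B - S.center⟫ = 0 := inner_symmedian_sub_eq_zero_of_inner_tangent hA hB hC hTB
  have hzC : ⟪z, C - S.center⟫ = 0 := by
    have h := inner_symmedian_sub_eq_zero_of_inner_tangent hA hC hB hTC
    rwa [real_inner_comm (B - A), sub_right_comm] at h
  have hperp : ⟪C - B, S.center - midpoint ℝ B C⟫ = 0 := by
    have hOBC : dist S.center B = dist S.center C := by
      rw [dist_comm, mem_sphere.1 hB, dist_comm, mem_sphere.1 hC]
    exact AffineSubspace.mem_perpBisector_iff_inner_eq_zero'.1
      (AffineSubspace.mem_perpBisector_iff_dist_eq.2 hOBC)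
  have hind : LinearIndependent ℝ ![C - B, S.center - midpoint ℝ B C] := by
    rw [LinearIndependent.pair_iff' (sub_ne_zero.2 hBC.symm)]
    rintro r hr
    rw [← hr, real_inner_smul_right, real_inner_self_eq_norm_sq, mul_eq_zero,
      or_iff_left (by simpa [sub_eq_zero] using hBC.symm)] at hperp
    rw [hperp, zero_smul, eq_comm, sub_eq_zero] at hr
    exact hO hr.symm
  have hmid : S.center - midpoint ℝ B C = (-1 / 2 : ℝ) • ((B - S.center) + (C - S.center)) := by
    rw [midpoint_eq_smul_add, invOf_eq_inv]; module
  refine hind.eq_zero_of_inner_eq_zero ?_ ?_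
  · rw [← sub_sub_sub_cancel_right C B S.center, inner_sub_left, real_inner_comm z,
      real_inner_comm z, hzB, hzC, sub_zero]
  · rw [hmid, real_inner_smul_left, inner_add_left, real_inner_comm z, real_inner_comm z, hzB, hzC,
      add_zero, mul_zero]

theorem mem_line_iff_mul_norm_sq_eq {A B C T M : V} {x y : ℝ}
    (h : LinearIndependent ℝ ![B - A, C - A])
    (hT : (2 * ⟪B - A, C - A⟫) • (T - A) = ‖C - A‖ ^ 2 • (B - A) + ‖B - A‖ ^ 2 • (C - A))
    (hM : M - A = x • (B - A) + y • (C - A)) :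
    M ∈ line[ℝ, A, T] ↔ x * ‖B - A‖ ^ 2 = y * ‖C - A‖ ^ 2 := by
  have hc : ‖C - A‖ ^ 2 ≠ 0 := pow_ne_zero 2 (norm_ne_zero_iff.2 (h.ne_zero 1))
  have hb : 2 * ⟪B - A, C - A⟫ ≠ 0 := by
    intro hb
    rw [hb, zero_smul, eq_comm] at hT
    exact hc (h.eq_zero_of_pair hT).1
  have hT' : T - A = (‖C - A‖ ^ 2 / (2 * ⟪B - A, C - A⟫)) • (B - A) +
      (‖B - A‖ ^ 2 / (2 * ⟪B - A, C - A⟫)) • (C - A) := by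
    rw [div_eq_inv_mul, div_eq_inv_mul, ← smul_smul, ← smul_smul, ← smul_add, ← hT, smul_smul,
      inv_mul_cancel₀ hb, one_smul]
  rw [mem_line_iff_exists_sub_eq_smul, hM, hT', h.exists_smul_pair_iff (div_ne_zero hc hb),
    mul_div_assoc', mul_div_assoc', div_left_inj' hb]

theorem miquel_point_mem_line_iff [Fact (finrank ℝ V = 2)] {S₁ S₂ : Sphere V} {A B C T M : V}
    {s t : ℝ} (h : LinearIndependent ℝ ![B - A, C - A])
    (hT : (2 * ⟪B - A, C - A⟫) • (T - A) = ‖C - A‖ ^ 2 • (B - A) + ‖B - A‖ ^ 2 • (C - A))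
    (hMA : M ≠ A) (hs0 : s ≠ 0) (hs1 : s ≠ 1) (ht0 : t ≠ 0)
    (hA₁ : A ∈ S₁) (hB₁ : B ∈ S₁) (hP₁ : lineMap A C s ∈ S₁) (hM₁ : M ∈ S₁)
    (hA₂ : A ∈ S₂) (hC₂ : C ∈ S₂) (hQ₂ : lineMap A B t ∈ S₂) (hM₂ : M ∈ S₂) :
    M ∈ line[ℝ, A, T] ↔ s = t := by
  obtain ⟨x, y, hM⟩ := h.exists_eq_smul_add_smul (M - A)
  have hrel := miquel_relation hs0 ht0 hA₁ hB₁ hP₁ hM₁ hA₂ hC₂ hQ₂ hM₂ hM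
  have ha : ‖B - A‖ ^ 2 ≠ 0 := pow_ne_zero 2 (norm_ne_zero_iff.2 (h.ne_zero 0))
  have hc : ‖C - A‖ ^ 2 ≠ 0 := pow_ne_zero 2 (norm_ne_zero_iff.2 (h.ne_zero 1))
  rw [mem_line_iff_mul_norm_sq_eq h hT hM]
  constructor
  · intro hxy
    have hx : x ≠ 0 := by
      rintro rfl
      obtain rfl : y = 0 := by simpa [hc] using hxy.symm
      exact hMA (sub_eq_zero.1 (by simpa using hM))
    have hst : x * ‖B - A‖ ^ 2 * (s - t) = 0 := by linear_combination hrel - (1 - s) * hxy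
    linarith [(mul_eq_zero.1 hst).resolve_left (mul_ne_zero hx ha)]
  · rintro rfl
    have hst : (1 - s) * (x * ‖B - A‖ ^ 2 - y * ‖C - A‖ ^ 2) = 0 := by linear_combination hrel
    linarith [(mul_eq_zero.1 hst).resolve_left (sub_ne_zero.2 (Ne.symm hs1))]

end InnerProductSpace

theorem IsTangentAt.inner_sub_eq_zero {S : Sphere (EuclideanSpace ℝ (Fin 2))}
    {L : AffineSubspace ℝ (EuclideanSpace ℝ (Fin 2))} {P X : EuclideanSpace ℝ (Fin 2)}
    (h : IsTangentAt S L P) (hX : X ∈ L) : ⟪X - P, P - S.center⟫ = 0 :=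
  -- otherwise the second intersection of the line `PX` with `S` is a second common point
  Sphere.secondInter_eq_self_iff.1 <| h.2.2 _ ((Sphere.secondInter_mem _).2 h.1) <|
    affineSpan_pair_le_of_mem_of_mem h.2.1 hX (S.secondInter_vsub_mem_affineSpan P X)

theorem miquel_point_mem_symmedian_iff_cevian_point_mem_median_general
    (A B C B_A C_A N_A M_A M_t : EuclideanSpace ℝ (Fin 2))
    (hABC : AffineIndependent ℝ ![A, B, C])
    (S : Sphere (EuclideanSpace ℝ (Fin 2)))
    (hS : A ∈ S ∧ B ∈ S ∧ C ∈ S)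
    (hant : midpoint ℝ B C ≠ S.center)
    (lB lC : AffineSubspace ℝ (EuclideanSpace ℝ (Fin 2)))
    (hlB : (∃ p q : EuclideanSpace ℝ (Fin 2), p ≠ q ∧ lB = line[ℝ, p, q]) ∧
      IsTangentAt S lB B)
    (hlC : (∃ p q : EuclideanSpace ℝ (Fin 2), p ≠ q ∧ lC = line[ℝ, p, q]) ∧
      IsTangentAt S lC C)
    (hMt : M_t ∈ lB ∧ M_t ∈ lC)
    (hcev : IsCevianPair A B C B_A C_A)
    (hN₁ : N_A ∈ line[ℝ, B, B_A]) (hN₂ : N_A ∈ line[ℝ, C, C_A])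
    (hM : IsMiquelPoint A B C B_A C_A N_A M_A)
    (hMA : M_A ≠ A) :
    M_A ∈ line[ℝ, A, M_t] ↔ N_A ∈ line[ℝ, A, midpoint ℝ B C] := by
  obtain ⟨hBA, hBA_ne_A, hBA_ne_C, hCA, hCA_ne_A, -, -⟩ := hcev
  obtain ⟨s, rfl⟩ := mem_affineSpan_pair_iff_exists_lineMap_eq.1 hBA
  obtain ⟨t, rfl⟩ := mem_affineSpan_pair_iff_exists_lineMap_eq.1 hCA
  have hs0 : s ≠ 0 := by rintro rfl; simp at hBA_ne_A
  have hs1 : s ≠ 1 := by rintro rfl; simp at hBA_ne_C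
  have ht0 : t ≠ 0 := by rintro rfl; simp at hCA_ne_A
  have hli := linearIndependent_sub_of_affineIndependent hABC
  have hBC : B ≠ C := fun h => by simpa [h] using hABC.injective.ne (show (1 : Fin 3) ≠ 2 by decide)
  have hT := two_inner_smul_sub_eq_of_inner_tangent hS.1 hS.2.1 hS.2.2 hBC hant
    (hlB.2.inner_sub_eq_zero hMt.1) (hlC.2.inner_sub_eq_zero hMt.2)
  obtain ⟨⟨O₁, r₁, hS₁⟩, ⟨O₂, r₂, hS₂⟩, -, -⟩ := hM
  rw [mem_line_midpoint_iff hli hs1 hN₁ hN₂]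
  exact miquel_point_mem_line_iff (S₁ := ⟨O₁, r₁⟩) (S₂ := ⟨O₂, r₂⟩) hli hT hMA hs0 hs1 ht0
    (hS₁ _ (by simp)) (hS₁ _ (by simp)) (hS₁ _ (by simp)) (hS₁ _ (by simp))
    (hS₂ _ (by simp)) (hS₂ _ (by simp)) (hS₂ _ (by simp)) (hS₂ _ (by simp))

/-- The Miquel–Steiner point `M_A ≠ A` lies on the symmedian from `A` (the line
through `A` and `M_t`) if and only if the cevian intersection point `N_A ≠ A`
lies on the median from `A` (the line through `A` and the midpoint of `BC`). -/
theorem miquel_point_mem_symmedian_iff_cevian_point_mem_median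
    (A B C B_A C_A N_A M_A M_t : EuclideanSpace ℝ (Fin 2))
    (hABC : AffineIndependent ℝ ![A, B, C])
    (S : Sphere (EuclideanSpace ℝ (Fin 2)))
    (hS : A ∈ S ∧ B ∈ S ∧ C ∈ S)
    (hant : midpoint ℝ B C ≠ S.center)
    (lB lC : AffineSubspace ℝ (EuclideanSpace ℝ (Fin 2)))
    (hlB : (∃ p q : EuclideanSpace ℝ (Fin 2), p ≠ q ∧ lB = line[ℝ, p, q]) ∧
      IsTangentAt S lB B)
    (hlC : (∃ p q : EuclideanSpace ℝ (Fin 2), p ≠ q ∧ lC = line[ℝ, p, q]) ∧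
      IsTangentAt S lC C)
    (hMt : M_t ∈ lB ∧ M_t ∈ lC)
    (hcev : IsCevianPair A B C B_A C_A)
    (hN₁ : N_A ∈ line[ℝ, B, B_A]) (hN₂ : N_A ∈ line[ℝ, C, C_A])
    (hCBN : AffineIndependent ℝ ![C, B_A, N_A])
    (hBCN : AffineIndependent ℝ ![B, C_A, N_A])
    (hM : IsMiquelPoint A B C B_A C_A N_A M_A)
    (hMA : M_A ≠ A) (hNA : N_A ≠ A) :
    M_A ∈ line[ℝ, A, M_t] ↔ N_A ∈ line[ℝ, A, midpoint ℝ B C] :=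
  miquel_point_mem_symmedian_iff_cevian_point_mem_median_general A B C B_A C_A N_A M_A M_t hABC S hS
    hant lB lC hlB hlC hMt hcev hN₁ hN₂ hM hMA
end

section
/- Let ABC be a triangle with incenter I, and let (B_A, C_A) be a cevian pair from A whose Miquel–Steiner point M_A equals I. Then dist(B, C_A) = dist(B, C) and dist(C, B_A) = dist(B, C). -/
open EuclideanGeometry

/-!
A point of the closed triangle `ABC` at equal distance `d` from the three side lines is the
incenter `(a • A + b • B + c • C) / (a + b + c)`, where `a = BC`, `b = CA`, `c = AB`: if
`α, β, γ ≥ 0` are its barycentric coordinates and `G` is the Gram determinant of `A - B, C - B`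
(the squared area of the parallelogram they span), then `d² a² = α² G`, `d² b² = β² G` and
`d² c² = γ² G`, so `α : β : γ = a : b : c`.

For this point `I`, expanding the circle equations at `A`, `C` and `I` shows that the power of `B`
with respect to any circle through `A`, `C` and `I` is `BA · BC`. By the power of a point, the
second intersection `C_A` of that circle with the line `AB` satisfies `BA · BC_A = BA · BC`,
hence `BC_A = BC`; exchanging `B` and `C` gives `CB_A = CB`.
-/

section

open Matrix
open scoped RealInnerProductSpace

variable {E : Type*} [NormedAddCommGroup E] [InnerProductSpace ℝ E]

lemma Matrix.det_gram_pair (u v : E) :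
    (gram ℝ ![u, v]).det = ⟪u, u⟫ * ⟪v, v⟫ - ⟪u, v⟫ ^ 2 := by
  simp [det_fin_two, gram_apply, real_inner_comm u v, sq]

lemma Matrix.det_gram_pair_smul_add_smul (u v : E) (s t p q : ℝ) :
    (gram ℝ ![s • u + t • v, p • u + q • v]).det =
      (s * q - t * p) ^ 2 * (gram ℝ ![u, v]).det := by
  simp only [det_gram_pair, inner_add_left, inner_add_right, real_inner_smul_left,
    real_inner_smul_right, real_inner_comm u v]
  ring

lemma Matrix.det_gram_pair_pos {u v : E} (h : LinearIndependent ℝ ![u, v]) :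
    0 < (gram ℝ ![u, v]).det :=
  (posDef_gram_of_linearIndependent h).det_pos

lemma AffineIndependent.linearIndependent_sub_pair {A B C : E}
    (h : AffineIndependent ℝ ![A, B, C]) : LinearIndependent ℝ ![A - B, C - B] := by
  refine LinearIndependent.pair_iff.2 fun s t hst => ?_
  have hw : ∑ i, ![s, -s - t, t] i = 0 ∧ ∑ i, ![s, -s - t, t] i • ![A, B, C] i = 0 := by
    simp only [Fin.sum_univ_three, cons_val_zero, cons_val_one, cons_val_two, tail_cons,
      head_cons]
    exact ⟨by ring, by rw [← hst]; module⟩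
  have h0 := h.eq_zero_of_sum_eq_zero hw.1 hw.2
  exact ⟨h0 0 (by simp), h0 2 (by simp)⟩

lemma exists_smul_add_smul_add_smul_of_mem_convexHull {A B C X : E}
    (hX : X ∈ convexHull ℝ ({A, B, C} : Set E)) :
    ∃ α β γ : ℝ, 0 ≤ α ∧ 0 ≤ β ∧ 0 ≤ γ ∧ α + β + γ = 1 ∧ α • A + β • B + γ • C = X := by
  rw [convexHull_insert (Set.insert_nonempty B {C}), convexHull_pair, mem_convexJoin] at hX
  obtain ⟨_, rfl, Y, ⟨β, γ, hβ, hγ, hβγ, rfl⟩, α, μ, hα, hμ, hαμ, rfl⟩ := hX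
  refine ⟨α, μ * β, μ * γ, hα, by positivity, by positivity, ?_, ?_⟩
  · linear_combination μ * hβγ + hαμ
  · simp only [smul_add, mul_smul, add_assoc]

lemma norm_sub_smul_sq_mul_inner_self (w v : E) (r : ℝ) :
    ‖w - r • v‖ ^ 2 * ⟪v, v⟫ = (gram ℝ ![w, v]).det + (r * ⟪v, v⟫ - ⟪w, v⟫) ^ 2 := by
  rw [← real_inner_self_eq_norm_sq, det_gram_pair]
  simp only [inner_sub_left, inner_sub_right, real_inner_smul_left, real_inner_smul_right,
    real_inner_comm w v]
  ring

lemma infDist_affineSpan_pair_sq_mul_norm_sq (X P Q : E) :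
    Metric.infDist X (line[ℝ, P, Q] : Set E) ^ 2 * ‖Q - P‖ ^ 2 =
      (gram ℝ ![X - P, Q - P]).det := by
  rcases eq_or_ne P Q with rfl | hPQ
  · simp [det_gram_pair]
  set v := Q - P
  have hv : 0 < ⟪v, v⟫ := real_inner_self_pos.2 (sub_ne_zero.2 hPQ.symm)
  have hdist : ∀ r : ℝ, dist X (r • v + P) ^ 2 * ⟪v, v⟫ =
      (gram ℝ ![X - P, v]).det + (r * ⟪v, v⟫ - ⟪X - P, v⟫) ^ 2 := fun r => by
    rw [dist_eq_norm, ← norm_sub_smul_sq_mul_inner_self, sub_add_eq_sub_sub_swap]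
  have hline : ∀ y ∈ (line[ℝ, P, Q] : Set E), ∃ r : ℝ, y = r • v + P := fun y hy => by
    rw [← vsub_vadd y P, SetLike.mem_coe, vadd_left_mem_affineSpan_pair] at hy
    obtain ⟨r, hr⟩ := hy
    exact ⟨r, sub_eq_iff_eq_add.1 hr.symm⟩
  set r₀ := ⟪X - P, v⟫ / ⟪v, v⟫
  have hfoot : dist X (r₀ • v + P) ^ 2 * ⟪v, v⟫ = (gram ℝ ![X - P, v]).det := by
    rw [hdist, div_mul_cancel₀ _ hv.ne', sub_self]
    ring
  have hinf : Metric.infDist X (line[ℝ, P, Q] : Set E) = dist X (r₀ • v + P) := by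
    refine le_antisymm (Metric.infDist_le_dist_of_mem ?_) ?_
    · exact smul_vsub_vadd_mem_affineSpan_pair r₀ P Q
    refine (Metric.le_infDist ⟨P, left_mem_affineSpan_pair ℝ P Q⟩).2 fun y hy => ?_
    obtain ⟨r, rfl⟩ := hline y hy
    refine (pow_le_pow_iff_left₀ dist_nonneg dist_nonneg two_ne_zero).1 ?_
    refine le_of_mul_le_mul_right ?_ hv
    rw [hfoot, hdist]
    exact le_add_of_nonneg_right (sq_nonneg _)
  rw [hinf, ← real_inner_self_eq_norm_sq, hfoot]

lemma infDist_affineSpan_pair_sq_mul_dist_sq (u v : E) {X P Q : E} {s t p q : ℝ}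
    (hX : X - P = s • u + t • v) (hQ : Q - P = p • u + q • v) :
    Metric.infDist X (line[ℝ, P, Q] : Set E) ^ 2 * dist P Q ^ 2 =
      (s * q - t * p) ^ 2 * (gram ℝ ![u, v]).det := by
  rw [dist_comm, dist_eq_norm, infDist_affineSpan_pair_sq_mul_norm_sq, hX, hQ,
    det_gram_pair_smul_add_smul]

theorem perimeter_smul_eq_of_infDist_eq {A B C I : E} (hABC : AffineIndependent ℝ ![A, B, C])
    (hI₁ : Metric.infDist I (line[ℝ, B, C] : Set E) = Metric.infDist I (line[ℝ, C, A] : Set E))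
    (hI₂ : Metric.infDist I (line[ℝ, C, A] : Set E) = Metric.infDist I (line[ℝ, A, B] : Set E))
    (hI : I ∈ convexHull ℝ ({A, B, C} : Set E)) :
    (dist B C + dist C A + dist A B) • I = dist B C • A + dist C A • B + dist A B • C := by
  obtain ⟨α, β, γ, hα, hβ, hγ, hsum, rfl⟩ := exists_smul_add_smul_add_smul_of_mem_convexHull hI
  obtain rfl : β = 1 - α - γ := by linear_combination hsum
  set G := (gram ℝ ![A - B, C - B]).det
  have hG : 0 < G := det_gram_pair_pos hABC.linearIndependent_sub_pair
  set d := Metric.infDist (α • A + (1 - α - γ) • B + γ • C) (line[ℝ, A, B] : Set E)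
  have hda : d ^ 2 * dist B C ^ 2 = α ^ 2 * G := by
    rw [← hI₂, ← hI₁, infDist_affineSpan_pair_sq_mul_dist_sq (A - B) (C - B)
      (s := α) (t := γ) (p := 0) (q := 1) (by module) (by module)]
    ring
  have hdb : d ^ 2 * dist C A ^ 2 = (1 - α - γ) ^ 2 * G := by
    rw [← hI₂, infDist_affineSpan_pair_sq_mul_dist_sq (A - B) (C - B)
      (s := α) (t := γ - 1) (p := 1) (q := -1) (by module) (by module)]
    ring
  have hdc : d ^ 2 * dist A B ^ 2 = γ ^ 2 * G := by
    rw [infDist_affineSpan_pair_sq_mul_dist_sq (A - B) (C - B)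
      (s := α - 1) (t := γ) (p := -1) (q := 0) (by module) (by module)]
    ring
  set a := dist B C
  set b := dist C A
  set c := dist A B
  have hb : 0 < b :=
    dist_pos.2 fun h => by simpa [h] using hABC.injective.ne (by decide : (0 : Fin 3) ≠ 2)
  have hαβ : α * b = (1 - α - γ) * a := by
    refine (sq_eq_sq₀ (by positivity) (by positivity)).1 (mul_right_cancel₀ hG.ne' ?_)
    linear_combination a ^ 2 * hdb - b ^ 2 * hda
  have hγβ : γ * b = (1 - α - γ) * c := by
    refine (sq_eq_sq₀ (by positivity) (by positivity)).1 (mul_right_cancel₀ hG.ne' ?_)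
    linear_combination c ^ 2 * hdb - b ^ 2 * hdc
  have hpβ : (a + b + c) * (1 - α - γ) = b := by linear_combination -hαβ - hγβ
  have hpα : (a + b + c) * α = a :=
    mul_left_cancel₀ hb.ne' (by linear_combination (a + b + c) * hαβ + a * hpβ)
  have hpγ : (a + b + c) * γ = c :=
    mul_left_cancel₀ hb.ne' (by linear_combination (a + b + c) * hγβ + c * hpβ)
  rw [smul_add, smul_add, smul_smul, smul_smul, smul_smul, hpα, hpβ, hpγ]

lemma EuclideanGeometry.Sphere.inner_sub_add_power_eq_zero {s : Sphere E} {Y : E} (hY : Y ∈ s)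
    (B : E) : ⟪Y - B, Y - B⟫ - 2 * ⟪Y - B, s.center - B⟫ + s.power B = 0 := by
  have h := norm_sub_sq_real (Y - B) (s.center - B)
  rw [sub_sub_sub_cancel_right, ← dist_eq_norm, mem_sphere.1 hY] at h
  rw [Sphere.power, dist_eq_norm, norm_sub_rev, real_inner_self_eq_norm_sq]
  linear_combination -h

theorem EuclideanGeometry.Sphere.power_eq_dist_mul_dist_of_perimeter_smul_eq {s : Sphere E}
    {A B C I : E} (hAC : A ≠ C)
    (hI : (dist B C + dist C A + dist A B) • I = dist B C • A + dist C A • B + dist A B • C)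
    (hA : A ∈ s) (hC : C ∈ s) (hIs : I ∈ s) : s.power B = dist B A * dist B C := by
  set a := dist B C
  set b := dist C A
  set c := dist A B
  set p := a + b + c
  have hw : p • (I - B) = a • (A - B) + c • (C - B) := by
    linear_combination (norm := module) hI
  have eA := s.inner_sub_add_power_eq_zero hA B
  have eC := s.inner_sub_add_power_eq_zero hC B
  have eI := s.inner_sub_add_power_eq_zero hIs B
  have hww : p ^ 2 * ⟪I - B, I - B⟫ =
      a ^ 2 * ⟪A - B, A - B⟫ + 2 * a * c * ⟪A - B, C - B⟫ + c ^ 2 * ⟪C - B, C - B⟫ := by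
    have h := congrArg (fun z => ⟪z, z⟫) hw
    simp only [inner_add_left, inner_add_right, real_inner_smul_left, real_inner_smul_right,
      real_inner_comm (A - B) (C - B)] at h
    linear_combination h
  have hwx : p * ⟪I - B, s.center - B⟫ =
      a * ⟪A - B, s.center - B⟫ + c * ⟪C - B, s.center - B⟫ := by
    simpa only [inner_add_left, real_inner_smul_left] using congrArg (⟪·, s.center - B⟫) hw
  have hu : ⟪A - B, A - B⟫ = c ^ 2 := by rw [real_inner_self_eq_norm_sq, ← dist_eq_norm]
  have hv : ⟪C - B, C - B⟫ = a ^ 2 := by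
    rw [real_inner_self_eq_norm_sq, ← dist_eq_norm, dist_comm]
  have hcos : b ^ 2 = ⟪A - B, A - B⟫ - 2 * ⟪A - B, C - B⟫ + ⟪C - B, C - B⟫ := by
    rw [real_inner_self_eq_norm_sq, real_inner_self_eq_norm_sq, ← norm_sub_sq_real,
      sub_sub_sub_cancel_right, ← dist_eq_norm, dist_comm]
  have hb : 0 < b := dist_pos.2 hAC.symm
  have hpb : p * b * (s.power B - a * c) = 0 := by
    linear_combination p ^ 2 * eI - hww + 2 * p * hwx - p * a * eA - p * c * eC - a * c * hcos
      - (a ^ 2 + a * c - p * a) * hu - (c ^ 2 + a * c - p * c) * hv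
  rw [dist_comm B A]
  linear_combination (mul_eq_zero.1 hpb).resolve_left (by positivity)

theorem dist_eq_dist_of_cospherical_incenter {A B C X I : E} (hAC : A ≠ C)
    (hI : (dist B C + dist C A + dist A B) • I = dist B C • A + dist C A • B + dist A B • C)
    (hX : X ∈ line[ℝ, A, B]) (hXA : X ≠ A) (hcos : Cospherical ({A, C, X, I} : Set E)) :
    dist B X = dist B C := by
  obtain ⟨O, r, hs⟩ := hcos
  set s : Sphere E := ⟨O, r⟩
  have hmem : ∀ Y ∈ ({A, C, X, I} : Set E), Y ∈ s := fun Y hY => mem_sphere.2 (hs Y hY)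
  have hpow := s.power_eq_dist_mul_dist_of_perimeter_smul_eq hAC hI (hmem A (by simp))
    (hmem C (by simp)) (hmem I (by simp))
  have hAB : A ≠ B := by
    rintro rfl
    exact hXA (by simpa using hX)
  have hB : B ∈ line[ℝ, A, X] := by
    rw [affineSpan_pair_eq_of_right_mem_of_ne hX hXA]
    exact right_mem_affineSpan_pair ℝ A B
  have h := Sphere.mul_dist_eq_abs_power hB (hmem A (by simp)) (hmem X (by simp))
  rw [hpow, abs_of_nonneg (by positivity)] at h
  exact mul_left_cancel₀ (dist_ne_zero.2 hAB.symm) h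

end

theorem cevian_lengths_of_miquel_point_eq_incenter_general
    (A B C B_A C_A N_A I : EuclideanSpace ℝ (Fin 2))
    (hABC : AffineIndependent ℝ ![A, B, C])
    (hI₁ : Metric.infDist I (line[ℝ, B, C] : Set (EuclideanSpace ℝ (Fin 2))) =
      Metric.infDist I (line[ℝ, C, A] : Set (EuclideanSpace ℝ (Fin 2))))
    (hI₂ : Metric.infDist I (line[ℝ, C, A] : Set (EuclideanSpace ℝ (Fin 2))) =
      Metric.infDist I (line[ℝ, A, B] : Set (EuclideanSpace ℝ (Fin 2))))
    (hI₃ : I ∈ interior (convexHull ℝ ({A, B, C} : Set (EuclideanSpace ℝ (Fin 2)))))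
    (hcev : IsCevianPair A B C B_A C_A)
    (hM : IsMiquelPoint A B C B_A C_A N_A I) :
    dist B C_A = dist B C ∧ dist C B_A = dist B C := by
  obtain ⟨hBA, hBAA, -, hCA, hCAA, -, -⟩ := hcev
  have hI := perimeter_smul_eq_of_infDist_eq hABC hI₁ hI₂ (interior_subset hI₃)
  have hAB : A ≠ B := fun h => by simpa [h] using hABC.injective.ne (by decide : (0 : Fin 3) ≠ 1)
  have hAC : A ≠ C := fun h => by simpa [h] using hABC.injective.ne (by decide : (0 : Fin 3) ≠ 2)
  have hI' : (dist C B + dist B A + dist A C) • I = dist C B • A + dist B A • C + dist A C • B := by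
    rw [dist_comm C B, dist_comm B A, dist_comm A C]
    linear_combination (norm := module) hI
  exact ⟨dist_eq_dist_of_cospherical_incenter hAC hI hCA hCAA hM.2.1,
    (dist_eq_dist_of_cospherical_incenter hAB hI' hBA hBAA hM.1).trans (dist_comm C B)⟩

/-- If the Miquel–Steiner point of a cevian pair `(B_A, C_A)` from `A` is the
incenter `I` of triangle `ABC` (the point inside the triangle equidistant from the
three sides), then `dist B C_A = dist B C` and `dist C B_A = dist B C`. -/
theorem cevian_lengths_of_miquel_point_eq_incenter
    (A B C B_A C_A N_A I : EuclideanSpace ℝ (Fin 2))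
    (hABC : AffineIndependent ℝ ![A, B, C])
    (hI₁ : Metric.infDist I (line[ℝ, B, C] : Set (EuclideanSpace ℝ (Fin 2))) =
      Metric.infDist I (line[ℝ, C, A] : Set (EuclideanSpace ℝ (Fin 2))))
    (hI₂ : Metric.infDist I (line[ℝ, C, A] : Set (EuclideanSpace ℝ (Fin 2))) =
      Metric.infDist I (line[ℝ, A, B] : Set (EuclideanSpace ℝ (Fin 2))))
    (hI₃ : I ∈ interior (convexHull ℝ ({A, B, C} : Set (EuclideanSpace ℝ (Fin 2)))))
    (hcev : IsCevianPair A B C B_A C_A)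
    (hN₁ : N_A ∈ line[ℝ, B, B_A]) (hN₂ : N_A ∈ line[ℝ, C, C_A])
    (hCBN : AffineIndependent ℝ ![C, B_A, N_A])
    (hBCN : AffineIndependent ℝ ![B, C_A, N_A])
    (hM : IsMiquelPoint A B C B_A C_A N_A I) :
    dist B C_A = dist B C ∧ dist C B_A = dist B C :=
  cevian_lengths_of_miquel_point_eq_incenter_general A B C B_A C_A N_A I hABC hI₁ hI₂ hI₃ hcev hM
end
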